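/- arXiv:1804.05150 — 8 statements merged into one kernel-verified Lean document; each statement's English description precedes it below -/
import Mathlib

section
/- For 0 < p < 1 and n ≥ 1, the generating function F(z,v) = Σ_{n≥1} Σ_{m≥1} P{D_n = m} z^n v^m / n, where P{D_n=m} = Σ_{j=0}^{m-1} C(m-1,j)(-1)^{n+j-1} C(p(j+1)-1, n-1), satisfies ∂F/∂z = v / (v(1-z) + (1-v)(1-z)^{1-p}). -/
open Real Filter Topology Set

/-- Generalized binomial coefficient `C(x,k)` with real upper argument. -/
noncomputable def gchoose (x : ℝ) (k : ℕ) : ℝ :=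
  (∏ i ∈ Finset.range k, (x - i)) / (Nat.factorial k)

/-- The explicit probabilities `P{D_n = m}` in the Bernoulli model. -/
noncomputable def PD (p : ℝ) (n m : ℕ) : ℝ :=
  ∑ j ∈ Finset.range m,
    (Nat.choose (m - 1) j : ℝ) * (-1 : ℝ) ^ (n + j - 1) * gchoose (p * (j + 1) - 1) (n - 1)

section Basics

lemma gchoose_zero (x : ℝ) : gchoose x 0 = 1 := by simp [gchoose]

lemma gchoose_succ (x : ℝ) (k : ℕ) :
    gchoose x (k + 1) = gchoose x k * ((x - k) / (k + 1)) := by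
  have h1 : ((k:ℝ) + 1) ≠ 0 := by positivity
  have h2 : ((k.factorial : ℕ) : ℝ) ≠ 0 := by positivity
  rw [gchoose, gchoose, Finset.prod_range_succ, Nat.factorial_succ, div_mul_div_comm]
  congr 1
  push_cast
  ring

lemma gchoose_nat (N k : ℕ) : gchoose (N : ℝ) k = (N.choose k : ℝ) := by
  induction k with
  | zero => simp [gchoose_zero]
  | succ k ih =>
    rw [gchoose_succ, ih]
    rcases le_or_gt k N with h | h
    · have h2 := Nat.choose_succ_right_eq N k
      have h3 : ((N.choose (k+1) * (k+1) : ℕ) : ℝ) = ((N.choose k * (N - k) : ℕ) : ℝ) := by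
        exact_mod_cast congrArg (Nat.cast : ℕ → ℝ) h2
      push_cast [Nat.cast_sub h] at h3
      have hk : ((k:ℝ) + 1) ≠ 0 := by positivity
      field_simp
      linarith
    · rw [Nat.choose_eq_zero_of_lt h, Nat.choose_eq_zero_of_lt (by omega)]
      simp

end Basics

section Vandermonde
open Polynomial

/-- `gchoose` as a polynomial. -/
noncomputable def gp (k : ℕ) : Polynomial ℝ :=
  (∏ i ∈ Finset.range k, (X - C (i : ℝ))) * C ((Nat.factorial k : ℝ)⁻¹)

lemma gp_eval (x : ℝ) (k : ℕ) : (gp k).eval x = gchoose x k := by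
  simp [gp, gchoose, eval_prod, div_eq_mul_inv]

lemma poly_eq_of_nat_eval {P Q : Polynomial ℝ} (h : ∀ N : ℕ, P.eval (N : ℝ) = Q.eval (N : ℝ)) :
    P = Q := by
  have : P - Q = 0 := by
    apply Polynomial.eq_zero_of_infinite_isRoot
    apply Set.infinite_of_injective_forall_mem (f := fun N : ℕ => (N : ℝ)) Nat.cast_injective
    intro N
    simp [IsRoot, h N]
  exact sub_eq_zero.mp this

lemma gchoose_vandermonde (a b : ℝ) (n : ℕ) :
    gchoose (a + b) n = ∑ k ∈ Finset.range (n + 1), gchoose a k * gchoose b (n - k) := by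
  -- step 1 : both nat
  have nat_nat : ∀ M N : ℕ, gchoose ((M : ℝ) + N) n
      = ∑ k ∈ Finset.range (n + 1), gchoose (M : ℝ) k * gchoose (N : ℝ) (n - k) := by
    intro M N
    have h := Nat.add_choose_eq M N n
    have : (((M + N).choose n : ℕ) : ℝ)
        = ∑ k ∈ Finset.range (n + 1), (M.choose k : ℝ) * (N.choose (n - k) : ℝ) := by
      rw [h]
      push_cast [Finset.Nat.sum_antidiagonal_eq_sum_range_succ_mk]
      rfl
    rw [← Nat.cast_add, gchoose_nat]
    simp_rw [gchoose_nat]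
    exact this
  -- step 2 : a real, b nat
  have real_nat : ∀ (a : ℝ) (N : ℕ), gchoose (a + N) n
      = ∑ k ∈ Finset.range (n + 1), gchoose a k * gchoose (N : ℝ) (n - k) := by
    intro a N
    have hpoly : (gp n).comp (X + C (N : ℝ))
        = ∑ k ∈ Finset.range (n + 1), gp k * C (gchoose (N : ℝ) (n - k)) := by
      apply poly_eq_of_nat_eval
      intro M
      simp only [eval_comp, eval_add, eval_X, eval_C, eval_finset_sum, eval_mul, gp_eval]
      exact nat_nat M N
    have := congrArg (Polynomial.eval a) hpoly
    simpa only [eval_comp, eval_add, eval_X, eval_C, eval_finset_sum, eval_mul, gp_eval]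
      using this
  -- step 3 : both real
  have hpoly : (gp n).comp (X + C a)
      = ∑ k ∈ Finset.range (n + 1), C (gchoose a k) * gp (n - k) := by
    apply poly_eq_of_nat_eval
    intro N
    simp only [eval_comp, eval_add, eval_X, eval_C, eval_finset_sum, eval_mul, gp_eval]
    rw [add_comm (N:ℝ) a]
    exact real_nat a N
  have := congrArg (Polynomial.eval b) hpoly
  simp only [eval_comp, eval_add, eval_X, eval_C, eval_finset_sum, eval_mul, gp_eval] at this
  rw [add_comm a b]
  exact this

end Vandermonde

section Series
open PowerSeries

/-- the formal power series of `(1-z)^a` -/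
noncomputable def Dser (a : ℝ) : PowerSeries ℝ :=
  PowerSeries.mk fun n => (-1 : ℝ) ^ n * gchoose a n

@[simp] lemma Dser_coeff (a : ℝ) (n : ℕ) :
    (PowerSeries.coeff n) (Dser a) = (-1 : ℝ) ^ n * gchoose a n := by
  simp [Dser]

lemma gchoose_zero_left (n : ℕ) (hn : n ≠ 0) : gchoose 0 n = 0 := by
  obtain ⟨m, rfl⟩ := Nat.exists_eq_succ_of_ne_zero hn
  rw [gchoose, Finset.prod_eq_zero (Finset.mem_range.mpr (Nat.succ_pos m)) (by simp)]
  simp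

lemma Dser_mul (a b : ℝ) : Dser a * Dser b = Dser (a + b) := by
  ext n
  rw [PowerSeries.coeff_mul, Dser_coeff, Finset.Nat.sum_antidiagonal_eq_sum_range_succ_mk]
  rw [gchoose_vandermonde, Finset.mul_sum]
  apply Finset.sum_congr rfl
  intro k hk
  have hk' : k ≤ n := Nat.lt_succ_iff.mp (Finset.mem_range.mp hk)
  simp only [Dser_coeff]
  have : (-1 : ℝ) ^ k * (-1 : ℝ) ^ (n - k) = (-1) ^ n := by
    rw [← pow_add, Nat.add_sub_cancel' hk']
  ring_nf
  rw [← this]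
  ring

lemma Dser_zero : Dser 0 = 1 := by
  ext n
  rcases Nat.eq_zero_or_pos n with h | h
  · subst h; simp [gchoose_zero]
  · rw [Dser_coeff, gchoose_zero_left n (by omega), PowerSeries.coeff_one]
    rw [if_neg (by omega)]
    ring

lemma Dser_pow (a : ℝ) (j : ℕ) : (Dser a) ^ j = Dser (a * j) := by
  induction j with
  | zero => simpa using Dser_zero.symm
  | succ j ih =>
    rw [pow_succ, ih, Dser_mul]
    push_cast
    ring_nf

lemma PD_eq_coeff (p : ℝ) (n m : ℕ) :
    PD p (n + 1) (m + 1) = (PowerSeries.coeff n) (Dser (p - 1) * (1 - Dser p) ^ m) := by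
  have hb : (1 - Dser p) ^ m
      = ∑ j ∈ Finset.range (m + 1), ((-1 : ℝ) ^ j * (m.choose j : ℝ)) • (Dser p) ^ j := by
    have : (1 : PowerSeries ℝ) - Dser p = (- Dser p) + 1 := by ring
    rw [this, add_pow]
    apply Finset.sum_congr rfl
    intro j hj
    rw [neg_pow, smul_eq_C_mul, map_mul, map_pow, map_neg, map_one, map_natCast]
    ring
  rw [hb, Finset.mul_sum]
  rw [map_sum]
  rw [PD]
  apply Finset.sum_congr rfl
  intro j hj
  rw [Dser_pow, smul_eq_C_mul, mul_left_comm, ← smul_eq_C_mul, map_smul, Dser_mul, smul_eq_mul,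
    Dser_coeff]
  have h1 : m + 1 - 1 = m := rfl
  have h2 : n + 1 - 1 = n := rfl
  have h3 : n + 1 + j - 1 = n + j := by omega
  rw [h1, h2, h3, pow_add]
  have h4 : p - 1 + p * (j : ℝ) = p * ((j : ℝ) + 1) - 1 := by ring
  rw [h4]
  ring

lemma neg_prod (f : ℕ → ℝ) (n : ℕ) :
    ∏ i ∈ Finset.range n, (-f i) = (-1) ^ n * ∏ i ∈ Finset.range n, f i := by
  induction n with
  | zero => simp
  | succ n ih => rw [Finset.prod_range_succ, Finset.prod_range_succ, ih, pow_succ]; ring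

lemma neg_one_pow_gchoose_nonneg {a : ℝ} (ha : a ≤ 0) (n : ℕ) :
    0 ≤ (-1 : ℝ) ^ n * gchoose a n := by
  rw [gchoose, ← mul_div_assoc]
  have h := neg_prod (fun i => a - (i : ℝ)) n
  have h2 : (-1:ℝ) ^ n * ∏ i ∈ Finset.range n, (a - (i:ℝ)) = ∏ i ∈ Finset.range n, ((i:ℝ) - a) := by
    rw [← h]
    apply Finset.prod_congr rfl
    intros; ring
  rw [h2]
  apply div_nonneg _ (by positivity)
  apply Finset.prod_nonneg
  intro i _
  have : (0:ℝ) ≤ (i:ℝ) := by positivity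
  linarith

lemma Dser_coeff_nonneg_of_nonpos {a : ℝ} (ha : a ≤ 0) (n : ℕ) :
    0 ≤ (PowerSeries.coeff n) (Dser a) := by
  rw [Dser_coeff]; exact neg_one_pow_gchoose_nonneg ha n

lemma one_sub_Dser_coeff_nonneg {p : ℝ} (hp0 : 0 ≤ p) (hp1 : p ≤ 1) (n : ℕ) :
    0 ≤ (PowerSeries.coeff n) (1 - Dser p) := by
  rcases Nat.eq_zero_or_pos n with h | h
  · subst h
    rw [map_sub, PowerSeries.coeff_one, if_pos rfl, Dser_coeff, gchoose_zero]
    norm_num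
  · obtain ⟨k, rfl⟩ := Nat.exists_eq_succ_of_ne_zero (by omega : n ≠ 0)
    rw [map_sub, PowerSeries.coeff_one, if_neg (by omega), Dser_coeff]
    have h := neg_prod (fun i => p - ((i:ℝ) + 1)) k
    have key : (-1:ℝ) ^ (k+1) * gchoose p (k+1)
        = -(p * (∏ i ∈ Finset.range k, ((i:ℝ) + 1 - p)) / ((k+1).factorial)) := by
      rw [gchoose, Finset.prod_range_succ']
      push_cast
      have h2 : ∏ i ∈ Finset.range k, ((i:ℝ) + 1 - p)
          = (-1:ℝ) ^ k * ∏ i ∈ Finset.range k, (p - ((i:ℝ) + 1)) := by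
        rw [← h]
        apply Finset.prod_congr rfl
        intros; ring
      rw [h2, pow_succ]
      ring
    rw [key]
    have hprod : 0 ≤ ∏ i ∈ Finset.range k, ((i:ℝ) + 1 - p) := by
      apply Finset.prod_nonneg
      intro i _
      have : (0:ℝ) ≤ (i:ℝ) := by positivity
      linarith
    have hfac : (0:ℝ) ≤ ((k+1).factorial : ℝ) := by positivity
    have : 0 ≤ p * (∏ i ∈ Finset.range k, ((i:ℝ) + 1 - p)) / ((k+1).factorial) := by
      apply div_nonneg (by nlinarith) hfac
    linarith

lemma coeff_mul_nonneg {φ ψ : PowerSeries ℝ} (hφ : ∀ n, 0 ≤ PowerSeries.coeff n φ)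
    (hψ : ∀ n, 0 ≤ PowerSeries.coeff n ψ) (n : ℕ) :
    0 ≤ PowerSeries.coeff n (φ * ψ) := by
  rw [PowerSeries.coeff_mul]
  apply Finset.sum_nonneg
  intro ij _
  exact mul_nonneg (hφ _) (hψ _)

lemma coeff_pow_nonneg {ψ : PowerSeries ℝ} (hψ : ∀ n, 0 ≤ PowerSeries.coeff n ψ) (m : ℕ)
    (n : ℕ) : 0 ≤ PowerSeries.coeff n (ψ ^ m) := by
  induction m generalizing n with
  | zero =>
    rw [pow_zero, PowerSeries.coeff_one]
    split <;> norm_num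
  | succ m ih =>
    rw [pow_succ]
    exact coeff_mul_nonneg ih hψ n

lemma PD_nonneg {p : ℝ} (hp0 : 0 < p) (hp1 : p < 1) (n m : ℕ) :
    0 ≤ PD p (n + 1) (m + 1) := by
  rw [PD_eq_coeff]
  exact coeff_mul_nonneg (Dser_coeff_nonneg_of_nonpos (by linarith))
    (coeff_pow_nonneg (one_sub_Dser_coeff_nonneg hp0.le hp1.le) m) n

lemma coeff_pow_eq_zero {ψ : PowerSeries ℝ} (hψ : PowerSeries.coeff 0 ψ = 0) (m : ℕ) :
    ∀ n, n < m → PowerSeries.coeff n (ψ ^ m) = 0 := by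
  induction m with
  | zero => intro n hn; omega
  | succ m ih =>
    intro n hn
    rw [pow_succ, PowerSeries.coeff_mul]
    apply Finset.sum_eq_zero
    intro ij hij
    rw [Finset.HasAntidiagonal.mem_antidiagonal] at hij
    rcases lt_or_ge ij.1 m with h | h
    · rw [ih ij.1 h, zero_mul]
    · have h1 : ij.2 = 0 := by omega
      rw [h1, hψ, mul_zero]

lemma PD_vanish {p : ℝ} (n m : ℕ) (h : n < m) : PD p (n + 1) (m + 1) = 0 := by
  rw [PD_eq_coeff, PowerSeries.coeff_mul]
  apply Finset.sum_eq_zero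
  intro ij hij
  rw [Finset.HasAntidiagonal.mem_antidiagonal] at hij
  have hψ : PowerSeries.coeff 0 (1 - Dser p) = 0 := by
    rw [map_sub, PowerSeries.coeff_one, if_pos rfl, Dser_coeff, gchoose_zero]
    norm_num
  rw [coeff_pow_eq_zero hψ m ij.2 (by omega), mul_zero]

end Series

section Bounds

/-- geometric growth bound for `gchoose`. -/
lemma exists_gchoose_bound (a : ℝ) {ρ : ℝ} (hρ : 1 < ρ) :
    ∃ C : ℝ, 0 ≤ C ∧ ∀ n, |gchoose a n| ≤ C * ρ ^ n := by
  obtain ⟨N, hN⟩ : ∃ N : ℕ, |a| ≤ (ρ - 1) * N := by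
    obtain ⟨N, hN⟩ := exists_nat_ge (|a| / (ρ - 1))
    exact ⟨N, by rw [div_le_iff₀ (by linarith)] at hN; linarith⟩
  -- ratio bounded by ρ from N on
  have step : ∀ n, N ≤ n → |gchoose a (n + 1)| ≤ ρ * |gchoose a n| := by
    intro n hn
    rw [gchoose_succ, abs_mul, abs_div]
    have h1 : |a - (n:ℝ)| ≤ ρ * ((n:ℝ) + 1) := by
      have h2 : |a - (n:ℝ)| ≤ |a| + n := by
        calc |a - (n:ℝ)| ≤ |a| + |(n:ℝ)| := abs_sub _ _
        _ = |a| + n := by rw [Nat.abs_cast]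
      have h3 : (N : ℝ) ≤ n := by exact_mod_cast hn
      nlinarith [abs_nonneg a]
    have h4 : |((n:ℝ) + 1)| = (n:ℝ) + 1 := abs_of_nonneg (by positivity)
    rw [h4]
    calc |gchoose a n| * (|a - (n:ℝ)| / ((n:ℝ)+1)) ≤ |gchoose a n| * ρ := by
          apply mul_le_mul_of_nonneg_left _ (abs_nonneg _)
          rw [div_le_iff₀ (by positivity)]
          nlinarith [h1]
      _ = ρ * |gchoose a n| := by ring
  have key : ∀ k, |gchoose a (N + k)| ≤ |gchoose a N| * ρ ^ k := by
    intro k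
    induction k with
    | zero => simp
    | succ k ih =>
      have := step (N + k) (by omega)
      calc |gchoose a (N + (k+1))| = |gchoose a ((N + k) + 1)| := by ring_nf
        _ ≤ ρ * |gchoose a (N + k)| := this
        _ ≤ ρ * (|gchoose a N| * ρ ^ k) := by nlinarith [abs_nonneg (gchoose a (N+k))]
        _ = |gchoose a N| * ρ ^ (k+1) := by ring
  set M : ℝ := (Finset.range (N + 1)).sup' (by simp) (fun n => |gchoose a n|) with hM
  have hM0 : 0 ≤ M := le_trans (abs_nonneg (gchoose a 0))
    (Finset.le_sup' (fun n => |gchoose a n|) (Finset.mem_range.mpr (Nat.succ_pos N)))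
  refine ⟨M, hM0, fun n => ?_⟩
  rcases le_or_gt n N with h | h
  · calc |gchoose a n| ≤ M :=
        Finset.le_sup' (fun n => |gchoose a n|) (Finset.mem_range.mpr (by omega))
      _ ≤ M * ρ ^ n := by nlinarith [one_le_pow₀ hρ.le (n := n), pow_pos (by linarith : (0:ℝ) < ρ) n]
  · obtain ⟨k, rfl⟩ : ∃ k, n = N + k := ⟨n - N, by omega⟩
    calc |gchoose a (N + k)| ≤ |gchoose a N| * ρ ^ k := key k
      _ ≤ M * ρ ^ k := by
          apply mul_le_mul_of_nonneg_right _ (by positivity)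
          exact Finset.le_sup' (fun n => |gchoose a n|) (Finset.mem_range.mpr (by omega))
      _ ≤ M * ρ ^ (N + k) := by
          apply mul_le_mul_of_nonneg_left _ hM0
          apply pow_le_pow_right₀ (by linarith) (by omega)

/-- master summability lemma -/
lemma summable_master (a : ℝ) {t : ℝ} (ht : |t| < 1) :
    Summable fun n : ℕ => ((n : ℝ) + 1) * |gchoose a n| * |t| ^ n := by
  rcases eq_or_ne t 0 with rfl | h0
  · apply (summable_nat_add_iff 1).mp
    simp only [abs_zero]
    convert summable_zero with n
    rw [zero_pow (by omega)]
    ring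
  · have ht0 : 0 < |t| := abs_pos.mpr h0
    set ρ : ℝ := (1 + |t|) / (2 * |t|) with hρdef
    have hρ : 1 < ρ := by
      rw [hρdef, lt_div_iff₀ (by positivity : (0:ℝ) < 2 * |t|)]
      linarith
    have hρt : ρ * |t| = (1 + |t|) / 2 := by
      rw [hρdef]; field_simp
    have hρt1 : ρ * |t| < 1 := by rw [hρt]; linarith
    obtain ⟨C, hC0, hC⟩ := exists_gchoose_bound a hρ
    have hub : ∀ n : ℕ, ((n : ℝ) + 1) * |gchoose a n| * |t| ^ n
        ≤ C * (((n:ℝ) + 1) * (ρ * |t|) ^ n) := by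
      intro n
      calc ((n : ℝ) + 1) * |gchoose a n| * |t| ^ n ≤ ((n:ℝ)+1) * (C * ρ ^ n) * |t| ^ n := by
            apply mul_le_mul_of_nonneg_right _ (by positivity)
            exact mul_le_mul_of_nonneg_left (hC n) (by positivity)
        _ = C * (((n:ℝ) + 1) * (ρ * |t|) ^ n) := by rw [mul_pow]; ring
    have hsum : Summable (fun n : ℕ => C * (((n:ℝ) + 1) * (ρ * |t|) ^ n)) := by
      apply Summable.mul_left
      have h1 : Summable fun n : ℕ => ((n:ℝ)) * (ρ * |t|) ^ n := by
        have := summable_pow_mul_geometric_of_norm_lt_one (R := ℝ) 1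
          (r := ρ * |t|) (by rwa [Real.norm_eq_abs, abs_of_pos (by positivity)])
        simpa using this
      have h2 : Summable fun n : ℕ => (ρ * |t|) ^ n :=
        summable_geometric_of_lt_one (by positivity) hρt1
      have := h1.add h2
      convert this using 2 with n
      rfl
      ring
    exact Summable.of_nonneg_of_le (fun n => by positivity) hub hsum

end Bounds

section Binomial

lemma summable_gchoose (a : ℝ) {t : ℝ} (ht : |t| < 1) :
    Summable fun n : ℕ => gchoose a n * t ^ n := by
  apply Summable.of_norm_bounded (summable_master a ht)
  intro n
  rw [norm_mul, norm_pow, Real.norm_eq_abs, Real.norm_eq_abs]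
  have hX : 0 ≤ |gchoose a n| * |t| ^ n := by positivity
  have hn : (0:ℝ) ≤ (n:ℝ) := Nat.cast_nonneg n
  nlinarith [mul_nonneg hn hX]

/-- summable bound for the derivative series on a ball of radius `r < 1`. -/
lemma summable_deriv_bound (a : ℝ) {r : ℝ} (hr0 : 0 < r) (hr1 : r < 1) :
    Summable fun n : ℕ => r⁻¹ * (((n:ℝ) + 1) * |gchoose a n| * r ^ n) := by
  apply Summable.mul_left
  have : |r| = r := abs_of_pos hr0
  simpa [this] using summable_master a (t := r) (by rwa [this])

lemma deriv_term_bound (a : ℝ) {r z : ℝ} (hr0 : 0 < r) (hz : |z| ≤ r) (n : ℕ) :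
    ‖gchoose a n * ((n : ℝ) * z ^ (n - 1))‖ ≤ r⁻¹ * (((n:ℝ) + 1) * |gchoose a n| * r ^ n) := by
  rcases n with _ | k
  · simp
    positivity
  · rw [Real.norm_eq_abs, abs_mul, abs_mul, Nat.abs_cast, abs_pow]
    have h1 : |z| ^ (k + 1 - 1) ≤ r ^ k := by
      simpa using pow_le_pow_left₀ (abs_nonneg z) hz k
    have h2 : r ^ (k + 1) = r * r ^ k := by ring
    have h3 : (0:ℝ) ≤ |gchoose a (k+1)| := abs_nonneg _
    have h4 : ((k:ℝ) + 1) ≤ (k:ℝ) + 1 + 1 := by linarith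
    have hk : (0:ℝ) ≤ (k:ℝ) + 1 := by positivity
    calc |gchoose a (k+1)| * (((k+1 : ℕ):ℝ) * |z| ^ (k + 1 - 1))
        ≤ |gchoose a (k+1)| * (((k:ℝ) + 1) * r ^ k) := by
          push_cast
          apply mul_le_mul_of_nonneg_left _ h3
          exact mul_le_mul_of_nonneg_left h1 hk
      _ ≤ r⁻¹ * ((((k+1 : ℕ):ℝ) + 1) * |gchoose a (k+1)| * r ^ (k+1)) := by
          push_cast
          rw [h2]
          have : r⁻¹ * ((((k:ℝ) + 1) + 1) * |gchoose a (k+1)| * (r * r ^ k))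
              = (((k:ℝ) + 1) + 1) * |gchoose a (k+1)| * r ^ k := by
            field_simp
          rw [this]
          nlinarith [pow_nonneg hr0.le k]

/-- the sum function of the binomial series -/
noncomputable def binfun (a : ℝ) : ℝ → ℝ := fun y => ∑' n : ℕ, gchoose a n * y ^ n

lemma binfun_hasDerivAt (a : ℝ) {y : ℝ} (hy : |y| < 1) :
    HasDerivAt (binfun a) (∑' n : ℕ, gchoose a n * ((n : ℝ) * y ^ (n - 1))) y := by
  set r : ℝ := (1 + |y|) / 2 with hr
  have hr0 : 0 < r := by positivity
  have hr1 : r < 1 := by rw [hr]; linarith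
  have hyr : |y| < r := by rw [hr]; linarith
  apply hasDerivAt_tsum_of_isPreconnected (summable_deriv_bound a hr0 hr1)
    (Metric.isOpen_ball (x := (0:ℝ)) (ε := r)) (convex_ball (0:ℝ) r).isPreconnected
    (fun n z _ => (hasDerivAt_pow n z).const_mul (gchoose a n))
    (fun n z hz => by
      have hz' : |z| ≤ r := by
        have h := Metric.mem_ball.mp hz
        rw [Real.dist_eq, sub_zero] at h
        exact h.le
      exact deriv_term_bound a hr0 hz' n)
    (Metric.mem_ball_self hr0)
    (summable_gchoose a (by simpa using hr0.trans_lt hr1 : |(0:ℝ)| < 1))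
    (by simpa [Real.dist_eq] using hyr)

lemma summable_deriv_at (a : ℝ) {y : ℝ} (hy : |y| < 1) :
    Summable fun n : ℕ => gchoose a n * ((n : ℝ) * y ^ (n - 1)) := by
  set r : ℝ := (1 + |y|) / 2 with hr
  have hr0 : 0 < r := by positivity
  have hr1 : r < 1 := by rw [hr]; linarith
  have hyr : |y| ≤ r := by rw [hr]; linarith
  exact Summable.of_norm_bounded (summable_deriv_bound a hr0 hr1)
    (fun n => deriv_term_bound a hr0 hyr n)

lemma summable_shift (a b : ℝ) {y : ℝ} (hy : |y| < 1) :
    Summable fun n : ℕ => (b - (n:ℝ)) * gchoose a n * y ^ n := by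
  apply Summable.of_norm_bounded ((summable_master a hy).mul_left (|b| + 1))
  intro n
  rw [Real.norm_eq_abs, abs_mul, abs_mul, abs_pow]
  have h1 : |b - (n:ℝ)| ≤ (|b| + 1) * ((n:ℝ) + 1) := by
    have := abs_sub b (n:ℝ)
    rw [Nat.abs_cast] at this
    nlinarith [abs_nonneg b, (Nat.cast_nonneg n : (0:ℝ) ≤ n)]
  have hX : 0 ≤ |gchoose a n| * |y| ^ n := by positivity
  calc |b - (n:ℝ)| * |gchoose a n| * |y| ^ n = |b - (n:ℝ)| * (|gchoose a n| * |y| ^ n) := by ring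
    _ ≤ ((|b| + 1) * ((n:ℝ) + 1)) * (|gchoose a n| * |y| ^ n) :=
        mul_le_mul_of_nonneg_right h1 hX
    _ = (|b| + 1) * (((n:ℝ) + 1) * |gchoose a n| * |y| ^ n) := by ring

lemma binfun_ode (a : ℝ) {y : ℝ} (hy : |y| < 1) :
    (1 + y) * (∑' n : ℕ, gchoose a n * ((n : ℝ) * y ^ (n - 1))) = a * binfun a y := by
  have S1 := summable_deriv_at a hy
  -- shift the derivative series
  have hshift : (∑' n : ℕ, gchoose a n * ((n : ℝ) * y ^ (n - 1)))
      = ∑' n : ℕ, (a - (n:ℝ)) * gchoose a n * y ^ n := by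
    rw [S1.tsum_eq_zero_add]
    norm_num
    congr 1
    funext n
    rw [gchoose_succ]
    have hn1 : ((n:ℝ) + 1) ≠ 0 := by positivity
    push_cast
    field_simp
  have hmul : y * (∑' n : ℕ, gchoose a n * ((n : ℝ) * y ^ (n - 1)))
      = ∑' n : ℕ, (n:ℝ) * gchoose a n * y ^ n := by
    rw [← tsum_mul_left]
    congr 1
    funext n
    rcases n with _ | k
    · simp
    · simp only [Nat.add_sub_cancel]
      push_cast
      ring
  have S2 := summable_shift a a hy
  have S3 : Summable fun n : ℕ => (n:ℝ) * gchoose a n * y ^ n := by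
    have := summable_shift a 0 hy
    simp only [zero_sub] at this
    have := this.neg
    convert this using 2 with n
    rfl
    ring
  calc (1 + y) * (∑' n : ℕ, gchoose a n * ((n : ℝ) * y ^ (n - 1)))
      = (∑' n : ℕ, gchoose a n * ((n : ℝ) * y ^ (n - 1)))
        + y * (∑' n : ℕ, gchoose a n * ((n : ℝ) * y ^ (n - 1))) := by ring
    _ = (∑' n : ℕ, (a - (n:ℝ)) * gchoose a n * y ^ n) + ∑' n : ℕ, (n:ℝ) * gchoose a n * y ^ n := by
        rw [hmul, hshift]
    _ = ∑' n : ℕ, ((a - (n:ℝ)) * gchoose a n * y ^ n + (n:ℝ) * gchoose a n * y ^ n) :=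
        (S2.tsum_add S3).symm
    _ = ∑' n : ℕ, a * (gchoose a n * y ^ n) := by congr 1; funext n; ring
    _ = a * binfun a y := by rw [tsum_mul_left]; rfl

lemma binfun_aux_hasDerivAt (a : ℝ) {y : ℝ} (hy : |y| < 1) :
    HasDerivAt (fun y => binfun a y * (1 + y) ^ (-a)) 0 y := by
  have hpos : (0:ℝ) < 1 + y := by
    rcases abs_lt.mp hy with ⟨h1, h2⟩
    linarith
  set d : ℝ := ∑' n : ℕ, gchoose a n * ((n : ℝ) * y ^ (n - 1)) with hd
  have h1 := binfun_hasDerivAt a hy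
  have h2 : HasDerivAt (fun y : ℝ => (1 + y) ^ (-a)) (-a * (1 + y) ^ (-a - 1)) y := by
    have hbase : HasDerivAt (fun y : ℝ => 1 + y) 1 y := (hasDerivAt_id y).const_add 1
    have hrpow := Real.hasDerivAt_rpow_const (x := 1 + y) (p := -a) (Or.inl hpos.ne')
    have := HasDerivAt.comp y hrpow hbase
    exact this.congr_deriv (by ring)
  have h3 := h1.mul h2
  have key := binfun_ode a hy
  have e1 : (1 + y) ^ (-a - 1) = (1 + y) ^ (-a) * (1 + y)⁻¹ := by
    rw [← Real.rpow_neg_one (1 + y), ← Real.rpow_add hpos]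
    ring_nf
  have hzero : d * (1 + y) ^ (-a) + binfun a y * (-a * (1 + y) ^ (-a - 1)) = 0 := by
    rw [e1]
    have hne : (1 + y) ≠ 0 := hpos.ne'
    field_simp
    linear_combination (1 + y) ^ (-a) * key
  rw [← hzero]
  exact h3

theorem hasSum_gchoose (a : ℝ) {x : ℝ} (hx : |x| < 1) :
    HasSum (fun n : ℕ => gchoose a n * x ^ n) ((1 + x) ^ a) := by
  have hpos : (0:ℝ) < 1 + x := by
    rcases abs_lt.mp hx with ⟨h1, h2⟩
    linarith
  have hsum := summable_gchoose a hx
  -- the function is constant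
  have hconst : binfun a x * (1 + x) ^ (-a) = binfun a 0 * (1 + 0 : ℝ) ^ (-a) := by
    set F : ℝ → ℝ := fun y => binfun a y * (1 + y) ^ (-a) with hF
    have hmem : ∀ y : ℝ, y ∈ Set.Icc (-|x|) (|x|) → |y| < 1 := by
      intro y hy
      rw [abs_lt]
      rcases hy with ⟨h1, h2⟩
      constructor <;> nlinarith [abs_lt.mp hx, abs_nonneg x]
    have hcont : ContinuousOn F (Set.Icc (-|x|) (|x|)) := fun y hy =>
      (binfun_aux_hasDerivAt a (hmem y hy)).continuousAt.continuousWithinAt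
    have hderiv : ∀ y ∈ Set.Ico (-|x|) (|x|), HasDerivWithinAt F 0 (Set.Ici y) y := by
      intro y hy
      exact (binfun_aux_hasDerivAt a (hmem y ⟨hy.1, hy.2.le⟩)).hasDerivWithinAt
    have hcc := constant_of_has_deriv_right_zero hcont hderiv
    have hx1 : x ∈ Set.Icc (-|x|) (|x|) := ⟨neg_abs_le x, le_abs_self x⟩
    have h0 : (0:ℝ) ∈ Set.Icc (-|x|) (|x|) := ⟨by simp [neg_nonpos], abs_nonneg x⟩
    show F x = F 0
    rw [hcc x hx1, hcc 0 h0]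
  have hbin0 : binfun a 0 = 1 := by
    rw [binfun]
    rw [tsum_eq_single 0 (fun n hn => by
      rw [zero_pow hn, mul_zero])]
    rw [pow_zero, gchoose_zero, mul_one]
  rw [hbin0, add_zero, Real.one_rpow, mul_one] at hconst
  have hne : ((1 + x) ^ a) ≠ 0 := (Real.rpow_pos_of_pos hpos a).ne'
  have hfx : binfun a x = (1 + x) ^ a := by
    rw [Real.rpow_neg hpos.le] at hconst
    exact (mul_inv_eq_one₀ hne).mp hconst
  have := hsum.hasSum
  rwa [show (∑' n : ℕ, gchoose a n * x ^ n) = binfun a x from rfl, hfx] at this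

end Binomial

section Main

lemma hasSum_Dser_eval (a : ℝ) {t : ℝ} (ht : |t| < 1) :
    HasSum (fun n : ℕ => (-1:ℝ) ^ n * gchoose a n * t ^ n) ((1 - t) ^ a) := by
  have h : |(-t)| < 1 := by rwa [abs_neg]
  have := hasSum_gchoose a h
  rw [show (1 + -t) = 1 - t by ring] at this
  apply HasSum.congr_fun this
  intro n
  rw [neg_pow]
  ring

lemma PD_succ (p : ℝ) (n m : ℕ) : PD p (n + 1) (m + 1)
    = ∑ j ∈ Finset.range (m + 1),
        (m.choose j : ℝ) * (-1:ℝ) ^ (n + j) * gchoose (p * (j + 1) - 1) n := by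
  rw [PD]
  apply Finset.sum_congr rfl
  intro j hj
  have h1 : m + 1 - 1 = m := rfl
  have h2 : n + 1 - 1 = n := rfl
  have h3 : n + 1 + j - 1 = n + j := by omega
  rw [h1, h2, h3]

lemma one_sub_rpow_lt {t p : ℝ} (ht : |t| < 1) (hp0 : 0 < p) (hp1 : p < 1) :
    |1 - (1 - t) ^ p| < 1 := by
  have h1t : 0 < 1 - t := by rcases abs_lt.mp ht with ⟨h1, h2⟩; linarith
  have hpow : 0 < (1 - t) ^ p := Real.rpow_pos_of_pos h1t p
  have hlt2 : (1 - t) ^ p < 2 := by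
    rcases le_or_gt (1 - t) 1 with h | h
    · have := Real.rpow_le_one h1t.le h hp0.le
      linarith
    · have hle : (1 - t) ^ p < (1 - t) ^ (1:ℝ) := Real.rpow_lt_rpow_of_exponent_lt h hp1
      rw [Real.rpow_one] at hle
      have h2 : 1 - t < 2 := by rcases abs_lt.mp ht with ⟨ha, hb⟩; linarith
      linarith
  rw [abs_lt]
  constructor <;> linarith

lemma hasSum_PD_t {p : ℝ} (hp0 : 0 < p) (hp1 : p < 1) (m : ℕ) {t : ℝ} (ht : |t| < 1) :
    HasSum (fun n : ℕ => PD p (n + 1) (m + 1) * t ^ n)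
      ((1 - t) ^ (p - 1) * (1 - (1 - t) ^ p) ^ m) := by
  have h1t : 0 < 1 - t := by rcases abs_lt.mp ht with ⟨h1, h2⟩; linarith
  have hterm : ∀ n : ℕ, PD p (n + 1) (m + 1) * t ^ n
      = ∑ j ∈ Finset.range (m + 1),
          ((m.choose j : ℝ) * (-1:ℝ) ^ j) * ((-1:ℝ) ^ n * gchoose (p * (j + 1) - 1) n * t ^ n) := by
    intro n
    rw [PD_succ, Finset.sum_mul]
    apply Finset.sum_congr rfl
    intro j hj
    rw [pow_add]
    ring
  have hj_sum : ∀ j : ℕ, HasSum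
      (fun n : ℕ => ((m.choose j : ℝ) * (-1:ℝ) ^ j) * ((-1:ℝ) ^ n * gchoose (p * (j + 1) - 1) n * t ^ n))
      (((m.choose j : ℝ) * (-1:ℝ) ^ j) * ((1 - t) ^ (p * (j + 1) - 1))) :=
    fun j => (hasSum_Dser_eval (p * (j + 1) - 1) ht).mul_left _
  have hsum := hasSum_sum (s := Finset.range (m + 1)) (fun j _ => hj_sum j)
  have hval : ∑ j ∈ Finset.range (m + 1),
      ((m.choose j : ℝ) * (-1:ℝ) ^ j) * ((1 - t) ^ (p * (j + 1) - 1))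
      = (1 - t) ^ (p - 1) * (1 - (1 - t) ^ p) ^ m := by
    have hsplit : ∀ j : ℕ, (1 - t) ^ (p * (j + 1) - 1)
        = (1 - t) ^ (p - 1) * ((1 - t) ^ p) ^ j := by
      intro j
      rw [show p * ((j:ℝ) + 1) - 1 = (p - 1) + p * j by ring, Real.rpow_add h1t,
        Real.rpow_mul h1t.le, Real.rpow_natCast]
    have hb : (1 - (1 - t) ^ p) ^ m
        = ∑ j ∈ Finset.range (m + 1), (-(1 - t) ^ p) ^ j * (m.choose j : ℝ) := by
      have h := add_pow (-(1 - t) ^ p) 1 m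
      rw [show (-(1 - t) ^ p + 1) = 1 - (1 - t) ^ p by ring] at h
      rw [h]
      apply Finset.sum_congr rfl
      intro j hj
      rw [one_pow, mul_one]
    rw [hb, Finset.mul_sum]
    apply Finset.sum_congr rfl
    intro j hj
    rw [hsplit j, neg_pow]
    ring
  rw [← hval]
  exact hsum.congr_fun hterm

lemma summable_PD_prod {p : ℝ} (hp0 : 0 < p) (hp1 : p < 1) {t w : ℝ} (ht : |t| < 1)
    (hw : |w| < 1) :
    Summable (fun q : ℕ × ℕ => PD p (q.2 + 1) (q.1 + 1) * w ^ (q.1 + 1) * t ^ q.2) := by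
  have habt : |(|t|)| < 1 := by rwa [abs_abs]
  have h1t : 0 < 1 - |t| := by rcases abs_lt.mp ht with ⟨h1, h2⟩; cases abs_cases t <;> linarith
  have hxlt : |1 - (1 - |t|) ^ p| < 1 := one_sub_rpow_lt habt hp0 hp1
  have habs : Summable (fun q : ℕ × ℕ => PD p (q.2 + 1) (q.1 + 1) * |w| ^ (q.1 + 1) * |t| ^ q.2) := by
    rw [summable_prod_of_nonneg (fun q => by
      have := PD_nonneg hp0 hp1 q.2 q.1
      positivity)]
    constructor
    · intro m
      have h := ((hasSum_PD_t hp0 hp1 m habt).summable).mul_left (|w| ^ (m + 1))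
      apply h.congr
      intro n
      simp only
      ring
    · apply Summable.congr (f := fun m : ℕ =>
        (|w| * ((1 - |t|) ^ (p - 1))) * (|w| * (1 - (1 - |t|) ^ p)) ^ m)
      · apply Summable.mul_left
        apply summable_geometric_of_norm_lt_one
        rw [norm_mul, Real.norm_eq_abs, Real.norm_eq_abs, abs_abs]
        calc |w| * |1 - (1 - |t|) ^ p| < 1 * 1 := by
              rcases eq_or_lt_of_le (abs_nonneg w) with h0 | h0
              · rw [← h0, zero_mul]; norm_num
              · exact mul_lt_mul' hw.le hxlt (abs_nonneg _) (by linarith)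
          _ = 1 := by norm_num
      · intro m
        have h := (hasSum_PD_t hp0 hp1 m habt)
        have h2 : (∑' n : ℕ, PD p (n + 1) (m + 1) * |w| ^ (m + 1) * |t| ^ n)
            = |w| ^ (m + 1) * ((1 - |t|) ^ (p - 1) * (1 - (1 - |t|) ^ p) ^ m) := by
          rw [show (fun n : ℕ => PD p (n + 1) (m + 1) * |w| ^ (m + 1) * |t| ^ n)
              = fun n : ℕ => |w| ^ (m + 1) * (PD p (n + 1) (m + 1) * |t| ^ n) from
            funext fun n => by ring]
          rw [tsum_mul_left, h.tsum_eq]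
        rw [mul_pow, h2, pow_succ]
        ring
  apply Summable.of_norm_bounded habs
  intro q
  rw [Real.norm_eq_abs, abs_mul, abs_mul, abs_pow, abs_pow,
    abs_of_nonneg (PD_nonneg hp0 hp1 q.2 q.1)]

lemma hasSum_key {p : ℝ} (hp0 : 0 < p) (hp1 : p < 1) {t w : ℝ} (ht : |t| < 1) (hw : |w| < 1) :
    HasSum (fun n : ℕ => (∑ m ∈ Finset.range (n + 1), PD p (n + 1) (m + 1) * w ^ (m + 1)) * t ^ n)
      (w * (1 - t) ^ (p - 1) / (1 - w * (1 - (1 - t) ^ p))) := by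
  have h1t : 0 < 1 - t := by rcases abs_lt.mp ht with ⟨h1, h2⟩; linarith
  have hxlt : |1 - (1 - t) ^ p| < 1 := one_sub_rpow_lt ht hp0 hp1
  have hwx : |w * (1 - (1 - t) ^ p)| < 1 := by
    rw [abs_mul]
    calc |w| * |1 - (1 - t) ^ p| < 1 * 1 := by
          rcases eq_or_lt_of_le (abs_nonneg w) with h0 | h0
          · rw [← h0, zero_mul]; norm_num
          · exact mul_lt_mul' hw.le hxlt (abs_nonneg _) (by linarith)
      _ = 1 := by norm_num
  set F : ℕ × ℕ → ℝ := fun q => PD p (q.2 + 1) (q.1 + 1) * w ^ (q.1 + 1) * t ^ q.2 with hFdef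
  have hF : Summable F := summable_PD_prod hp0 hp1 ht hw
  -- compute the total sum
  have hrow : ∀ m : ℕ, HasSum (fun n => F (m, n))
      (w ^ (m + 1) * ((1 - t) ^ (p - 1) * (1 - (1 - t) ^ p) ^ m)) := by
    intro m
    have h := ((hasSum_PD_t hp0 hp1 m ht).mul_left (w ^ (m + 1)))
    apply h.congr_fun
    intro n
    simp only [hFdef]
    ring
  have hcol : HasSum (fun m : ℕ => w ^ (m + 1) * ((1 - t) ^ (p - 1) * (1 - (1 - t) ^ p) ^ m))
      (w * (1 - t) ^ (p - 1) / (1 - w * (1 - (1 - t) ^ p))) := by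
    have hgeo : HasSum (fun m : ℕ => (w * (1 - (1 - t) ^ p)) ^ m)
        (1 - w * (1 - (1 - t) ^ p))⁻¹ := by
      apply hasSum_geometric_of_norm_lt_one
      rwa [Real.norm_eq_abs]
    have := hgeo.mul_left (w * (1 - t) ^ (p - 1))
    rw [show w * (1 - t) ^ (p - 1) * (1 - w * (1 - (1 - t) ^ p))⁻¹
        = w * (1 - t) ^ (p - 1) / (1 - w * (1 - (1 - t) ^ p)) from by rw [div_eq_mul_inv]] at this
    apply this.congr_fun
    intro m
    rw [mul_pow, pow_succ]
    ring
  have hTval : (∑' q, F q) = w * (1 - t) ^ (p - 1) / (1 - w * (1 - (1 - t) ^ p)) :=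
    (hF.hasSum.prod_fiberwise hrow).unique hcol
  have hT : HasSum F (w * (1 - t) ^ (p - 1) / (1 - w * (1 - (1 - t) ^ p))) := hTval ▸ hF.hasSum
  have hswap : HasSum (fun q : ℕ × ℕ => F (q.2, q.1))
      (w * (1 - t) ^ (p - 1) / (1 - w * (1 - (1 - t) ^ p))) :=
    ((Equiv.prodComm ℕ ℕ).hasSum_iff).mpr hT
  apply hswap.prod_fiberwise
  intro n
  have hzero : ∀ m ∉ Finset.range (n + 1),
      PD p (n + 1) (m + 1) * w ^ (m + 1) * t ^ n = 0 := by
    intro m hm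
    rw [PD_vanish n m (by simpa using Finset.mem_range.not.mp hm), zero_mul, zero_mul]
  have h := hasSum_sum_of_ne_finset_zero (s := Finset.range (n + 1)) (L := SummationFilter.unconditional ℕ)
    (f := fun m => PD p (n + 1) (m + 1) * w ^ (m + 1) * t ^ n) hzero
  rw [Finset.sum_mul]
  exact h

/-- The generating function `F(z,v) = Σ_{n≥1} Σ_{m≥1} P{D_n=m} z^n v^m / n` satisfies
`∂F/∂z = v / (v(1-z) + (1-v)(1-z)^{1-p})`. -/
theorem stmt0 (p : ℝ) (hp0 : 0 < p) (hp1 : p < 1) :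
    ∀ z v : ℝ, |z| < 1 → |v| < 1 →
      HasDerivAt (fun z : ℝ => ∑' n : ℕ, ∑' m : ℕ,
          PD p (n + 1) (m + 1) * z ^ (n + 1) * v ^ (m + 1) / (n + 1))
        (v / (v * (1 - z) + (1 - v) * (1 - z) ^ (1 - p))) z := by
  intro z v hz hv
  have h1z : 0 < 1 - z := by rcases abs_lt.mp hz with ⟨h1, h2⟩; linarith
  -- rewrite the function
  have hfun : (fun z : ℝ => ∑' n : ℕ, ∑' m : ℕ,
      PD p (n + 1) (m + 1) * z ^ (n + 1) * v ^ (m + 1) / (n + 1))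
      = fun z : ℝ => ∑' n : ℕ,
          (∑ m ∈ Finset.range (n + 1), PD p (n + 1) (m + 1) * v ^ (m + 1))
            * (z ^ (n + 1) / ((n : ℝ) + 1)) := by
    funext y
    congr 1
    funext n
    rw [tsum_eq_sum (s := Finset.range (n + 1)) (fun m hm => by
      rw [PD_vanish n m (by simpa using Finset.mem_range.not.mp hm)]
      simp)]
    rw [Finset.sum_mul]
    apply Finset.sum_congr rfl
    intro m hm
    push_cast
    ring
  rw [hfun]
  -- setup for termwise differentiation
  set r : ℝ := (1 + |z|) / 2 with hr
  have hr0 : 0 < r := by positivity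
  have hr1 : r < 1 := by rw [hr]; linarith
  have hzr : |z| < r := by rw [hr]; linarith
  have habsr : |r| < 1 := by rwa [abs_of_pos hr0]
  have habsv : |(|v|)| < 1 := by rwa [abs_abs]
  set c : ℕ → ℝ := fun n => ∑ m ∈ Finset.range (n + 1), PD p (n + 1) (m + 1) * v ^ (m + 1)
    with hc
  set u : ℕ → ℝ := fun n =>
    (∑ m ∈ Finset.range (n + 1), PD p (n + 1) (m + 1) * |v| ^ (m + 1)) * r ^ n with hu
  have hu_sum : Summable u := (hasSum_key hp0 hp1 habsr habsv).summable
  have hcu : ∀ n : ℕ, |c n| ≤ ∑ m ∈ Finset.range (n + 1), PD p (n + 1) (m + 1) * |v| ^ (m + 1) := by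
    intro n
    calc |c n| ≤ ∑ m ∈ Finset.range (n + 1), |PD p (n + 1) (m + 1) * v ^ (m + 1)| :=
        Finset.abs_sum_le_sum_abs _ _
      _ = ∑ m ∈ Finset.range (n + 1), PD p (n + 1) (m + 1) * |v| ^ (m + 1) := by
        apply Finset.sum_congr rfl
        intro m hm
        rw [abs_mul, abs_pow, abs_of_nonneg (PD_nonneg hp0 hp1 n m)]
  have hPDnn : ∀ n, 0 ≤ ∑ m ∈ Finset.range (n + 1), PD p (n + 1) (m + 1) * |v| ^ (m + 1) :=
    fun n => Finset.sum_nonneg fun m _ =>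
      mul_nonneg (PD_nonneg hp0 hp1 n m) (by positivity)
  have hmain : HasDerivAt (fun y : ℝ => ∑' n : ℕ, c n * (y ^ (n + 1) / ((n : ℝ) + 1)))
      (∑' n : ℕ, c n * z ^ n) z := by
    have := hasDerivAt_tsum_of_isPreconnected hu_sum
      (Metric.isOpen_ball (x := (0:ℝ)) (ε := r)) (convex_ball (0:ℝ) r).isPreconnected
      (g := fun n y => c n * (y ^ (n + 1) / ((n : ℝ) + 1)))
      (g' := fun n y => c n * y ^ n)
      (fun n y _ => by
        have h := ((hasDerivAt_pow (n + 1) y).div_const ((n : ℝ) + 1)).const_mul (c n)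
        have he : c n * ((((n:ℕ) + 1 : ℕ) : ℝ) * y ^ (n + 1 - 1) / ((n : ℝ) + 1)) = c n * y ^ n := by
          have h2 : ((n : ℝ) + 1) ≠ 0 := by positivity
          push_cast
          field_simp
        rwa [he] at h)
      (fun n y hy => by
        have hyr : |y| ≤ r := by
          have h := Metric.mem_ball.mp hy
          rw [Real.dist_eq, sub_zero] at h
          exact h.le
        rw [Real.norm_eq_abs, abs_mul, abs_pow]
        calc |c n| * |y| ^ n ≤ (∑ m ∈ Finset.range (n + 1), PD p (n + 1) (m + 1) * |v| ^ (m + 1)) * r ^ n := by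
              apply mul_le_mul (hcu n) (pow_le_pow_left₀ (abs_nonneg y) hyr n)
                (by positivity) (hPDnn n)
          _ = u n := rfl)
      (Metric.mem_ball_self hr0)
      (by
        apply summable_of_ne_finset_zero (s := (∅ : Finset ℕ))
        intro n _
        show c n * ((0:ℝ) ^ (n + 1) / ((n : ℝ) + 1)) = 0
        rw [zero_pow (Nat.succ_ne_zero n), zero_div, mul_zero])
      (by rw [Metric.mem_ball, Real.dist_eq, sub_zero]; exact hzr)
    exact this
  -- identify the sum of derivatives
  have hkey := hasSum_key hp0 hp1 hz hv
  have hder_eq : (∑' n : ℕ, c n * z ^ n)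
      = v * (1 - z) ^ (p - 1) / (1 - v * (1 - (1 - z) ^ p)) := hkey.tsum_eq
  -- final algebra
  have hxlt : |1 - (1 - z) ^ p| < 1 := one_sub_rpow_lt hz hp0 hp1
  have hden_pos : 0 < 1 - v * (1 - (1 - z) ^ p) := by
    have h1 : |v * (1 - (1 - z) ^ p)| < 1 := by
      rw [abs_mul]
      rcases eq_or_lt_of_le (abs_nonneg v) with h0 | h0
      · rw [← h0, zero_mul]; norm_num
      · calc |v| * |1 - (1 - z) ^ p| < 1 * 1 :=
            mul_lt_mul' hv.le hxlt (abs_nonneg _) (by linarith)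
          _ = 1 := by norm_num
    rcases abs_lt.mp h1 with ⟨ha, hb⟩
    linarith
  have hid : (v * (1 - z) + (1 - v) * (1 - z) ^ (1 - p)) * (1 - z) ^ (p - 1)
      = 1 - v * (1 - (1 - z) ^ p) := by
    have e1 : (1 - z) * (1 - z) ^ (p - 1) = (1 - z) ^ p := by
      have h := Real.rpow_add h1z 1 (p - 1)
      rw [Real.rpow_one] at h
      rw [← h, show (1:ℝ) + (p - 1) = p by ring]
    have e2 : (1 - z) ^ (1 - p) * (1 - z) ^ (p - 1) = 1 := by
      rw [← Real.rpow_add h1z, show (1 - p) + (p - 1) = (0:ℝ) by ring, Real.rpow_zero]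
    calc (v * (1 - z) + (1 - v) * (1 - z) ^ (1 - p)) * (1 - z) ^ (p - 1)
        = v * ((1 - z) * (1 - z) ^ (p - 1)) + (1 - v) * ((1 - z) ^ (1 - p) * (1 - z) ^ (p - 1)) := by
          ring
      _ = v * (1 - z) ^ p + (1 - v) * 1 := by rw [e1, e2]
      _ = 1 - v * (1 - (1 - z) ^ p) := by ring
  have hden2 : (v * (1 - z) + (1 - v) * (1 - z) ^ (1 - p)) ≠ 0 := by
    intro h0
    rw [h0, zero_mul] at hid
    linarith
  have hval : v * (1 - z) ^ (p - 1) / (1 - v * (1 - (1 - z) ^ p))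
      = v / (v * (1 - z) + (1 - v) * (1 - z) ^ (1 - p)) := by
    have hA : (1 - z) ^ (p - 1) ≠ 0 := (Real.rpow_pos_of_pos h1z _).ne'
    rw [← hid, mul_div_mul_right _ _ hA]
  rw [hder_eq, hval] at hmain
  exact hmain

end Main
end

section
/- Let 0 < p < 1 and define G(z,v,w) = v w / ((1 - v(1-(1-z)^{1-p})) (1 - w(1-(1-z)^p))) as a formal power series. Then G satisfies the partial differential equation ∂²G/(∂w∂z) = (1-p) G(z,v,1) ∂G/∂w + 2p G(z,1,w) ∂G/∂w, with G(0,v,w) = vw, G(z,v,0) = 0 and G(z,0,w) = 0. -/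
open Real Filter Topology Set

/-- The trivariate generating function of the joint law of path length and source degree. -/
noncomputable def G3 (p z v w : ℝ) : ℝ :=
  v * w / ((1 - v * (1 - (1 - z) ^ (1 - p))) * (1 - w * (1 - (1 - z) ^ p)))

lemma aux3 (P va wa a b A B : ℝ) (ha : a ≠ 0) (hb : b ≠ 0) (hAne : A ≠ 0) (hBne : B ≠ 0) :
    va * (va * ((1-P) * b⁻¹) * B + 2 * wa * (P * a⁻¹) * A) / (A^2 * B^3)
    = (1-P) * (va * 1 / (A * b)) * (va * A / (A * B)^2)
      + 2 * P * (1 * wa / (a * B)) * (va * A / (A * B)^2) := by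
  field_simp

set_option maxHeartbeats 1600000 in
/-- `G(z,v,w) = vw/((1-v(1-(1-z)^{1-p}))(1-w(1-(1-z)^p)))` satisfies the PDE
`∂²G/(∂w∂z) = (1-p) G(z,v,1) ∂G/∂w + 2p G(z,1,w) ∂G/∂w` with the stated side conditions. -/
theorem stmt3 (p : ℝ) (hp0 : 0 < p) (hp1 : p < 1) :
    (∀ v w : ℝ, G3 p 0 v w = v * w) ∧
    (∀ z v : ℝ, G3 p z v 0 = 0) ∧
    (∀ z w : ℝ, G3 p z 0 w = 0) ∧
    (∀ z v w : ℝ, |z| < 1 → |v| < 1 → |w| < 1 →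
      deriv (fun w' => deriv (fun z' => G3 p z' v w') z) w =
        (1 - p) * G3 p z v 1 * deriv (fun w' => G3 p z v w') w +
          2 * p * G3 p z 1 w * deriv (fun w' => G3 p z v w') w) := by
  refine ⟨fun v w => by simp [G3], fun z v => by simp [G3], fun z w => by simp [G3], ?_⟩
  intro z v w hz hv hw
  obtain ⟨hz1, hz2⟩ := abs_lt.mp hz
  have ht : (0:ℝ) < 1 - z := by linarith
  have ht2 : (1:ℝ) - z < 2 := by linarith
  have hq1 : (0:ℝ) < 1 - p := by linarith
  have hpow : ∀ q : ℝ, 0 < q → q ≤ 1 → 0 < (1-z)^q ∧ (1-z)^q < 2 := by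
    intro q hq hql
    refine ⟨Real.rpow_pos_of_pos ht q, ?_⟩
    calc (1-z)^q < 2^q := Real.rpow_lt_rpow ht.le ht2 hq
      _ ≤ 2^(1:ℝ) := Real.rpow_le_rpow_of_exponent_le one_le_two hql
      _ = 2 := Real.rpow_one 2
  obtain ⟨hT1p, hT1l⟩ := hpow (1-p) hq1 (by linarith)
  obtain ⟨hT2p, hT2l⟩ := hpow p hp0 hp1.le
  have hden : ∀ u c : ℝ, |u| < 1 → 0 < c → c < 2 → 0 < 1 - u * (1 - c) := by
    intro u c hu h1 h2
    have habs : |u * (1-c)| < 1 := by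
      rw [abs_mul]
      calc |u| * |1 - c| ≤ |u| * 1 := by
            apply mul_le_mul_of_nonneg_left _ (abs_nonneg u)
            exact abs_le.mpr ⟨by linarith, by linarith⟩
        _ < 1 := by simpa using hu
    have := (abs_lt.mp habs).2
    linarith
  have hA : 0 < 1 - v * (1 - (1-z)^(1-p)) := hden v _ hv hT1p hT1l
  have hB : ∀ w' : ℝ, |w'| < 1 → 0 < 1 - w' * (1 - (1-z)^p) :=
    fun w' hw' => hden w' _ hw' hT2p hT2l
  have hBw := hB w hw
  -- derivative in z, for every |w'| < 1
  have hzderiv : ∀ w' : ℝ, |w'| < 1 →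
      deriv (fun z' => G3 p z' v w') z =
        v * w' * (v * ((1-p) * (1-z)^(1-p-1)) * (1 - w' * (1 - (1-z)^p))
          + w' * (p * (1-z)^(p-1)) * (1 - v * (1 - (1-z)^(1-p))))
        / ((1 - v * (1 - (1-z)^(1-p))) * (1 - w' * (1 - (1-z)^p)))^2 := by
    intro w' hw'
    have hBp := hB w' hw'
    have hg : HasDerivAt (fun z' : ℝ => 1 - z') (-1) z := (hasDerivAt_id z).const_sub 1
    have h1 : HasDerivAt (fun z' : ℝ => (1 - z') ^ (1-p)) ((1-p) * (1-z)^(1-p-1) * (-1)) z :=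
      (Real.hasDerivAt_rpow_const (Or.inl ht.ne')).comp z hg
    have h2 : HasDerivAt (fun z' : ℝ => (1 - z') ^ p) (p * (1-z)^(p-1) * (-1)) z :=
      (Real.hasDerivAt_rpow_const (Or.inl ht.ne')).comp z hg
    have hA1 := ((h1.const_sub 1).const_mul v).const_sub 1
    have hB1 := ((h2.const_sub 1).const_mul w').const_sub 1
    have hne : (1 - v * (1 - (1-z)^(1-p))) * (1 - w' * (1 - (1-z)^p)) ≠ 0 :=
      (mul_pos hA hBp).ne'
    have h := (hasDerivAt_const z (v * w')).div (hA1.mul hB1) hne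
    exact h.deriv.trans (by simp only [Pi.mul_apply]; ring)
  have hid : HasDerivAt (fun x : ℝ => x) 1 w := hasDerivAt_id w
  -- derivative in w of G3
  have hGw : deriv (fun w' => G3 p z v w') w =
      v * (1 - v * (1 - (1-z)^(1-p))) /
        ((1 - v * (1 - (1-z)^(1-p))) * (1 - w * (1 - (1-z)^p)))^2 := by
    have hb := (hid.mul_const (1 - (1-z)^p)).const_sub 1
    have hdenD := hb.const_mul (1 - v * (1 - (1-z)^(1-p)))
    have h := (hid.const_mul v).div hdenD ((mul_pos hA hBw).ne')
    exact h.deriv.trans (by ring)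
  have hopen : {x : ℝ | |x| < 1} ∈ 𝓝 w :=
    (isOpen_lt continuous_abs continuous_const).mem_nhds hw
  have hev : (fun w' => deriv (fun z' => G3 p z' v w') z) =ᶠ[𝓝 w]
      (fun w' => v * w' * (v * ((1-p) * (1-z)^(1-p-1)) * (1 - w' * (1 - (1-z)^p))
          + w' * (p * (1-z)^(p-1)) * (1 - v * (1 - (1-z)^(1-p))))
        / ((1 - v * (1 - (1-z)^(1-p))) * (1 - w' * (1 - (1-z)^p)))^2) := by
    filter_upwards [hopen] with w' hw'
    exact hzderiv w' hw'
  rw [hev.deriv_eq, hGw]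
  -- compute the derivative of the explicit formula in w
  have hD : deriv (fun w' => v * w' * (v * ((1-p) * (1-z)^(1-p-1)) * (1 - w' * (1 - (1-z)^p))
          + w' * (p * (1-z)^(p-1)) * (1 - v * (1 - (1-z)^(1-p))))
        / ((1 - v * (1 - (1-z)^(1-p))) * (1 - w' * (1 - (1-z)^p)))^2) w =
      v * (v * ((1-p) * (1-z)^(1-p-1)) * (1 - w * (1 - (1-z)^p))
          + 2 * w * (p * (1-z)^(p-1)) * (1 - v * (1 - (1-z)^(1-p))))
        / ((1 - v * (1 - (1-z)^(1-p)))^2 * (1 - w * (1 - (1-z)^p))^3) := by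
    have hb := (hid.mul_const (1 - (1-z)^p)).const_sub 1
    have hnum := (hid.const_mul v).mul
        ((hb.const_mul (v * ((1-p) * (1-z)^(1-p-1)))).add
          ((hid.mul_const (p * (1-z)^(p-1))).mul_const
            (1 - v * (1 - (1-z)^(1-p)))))
    have hdenD := (hb.const_mul (1 - v * (1 - (1-z)^(1-p)))).pow 2
    have hne : ((1 - v * (1 - (1-z)^(1-p))) * (1 - w * (1 - (1-z)^p)))^2 ≠ 0 :=
      pow_ne_zero 2 (mul_pos hA hBw).ne'
    have h := hnum.div hdenD hne
    refine h.deriv.trans ?_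
    rw [div_eq_div_iff (by positivity) (by positivity)]
    simp only [Pi.mul_apply, Pi.add_apply, Pi.pow_apply]
    ring
  rw [hD]
  have hT3 : ((1:ℝ)-z)^(1-p-1) = (((1:ℝ)-z)^p)⁻¹ := by
    rw [show (1:ℝ)-p-1 = -p by ring, Real.rpow_neg ht.le]
  have hT4 : ((1:ℝ)-z)^(p-1) = (((1:ℝ)-z)^(1-p))⁻¹ := by
    rw [show p-1 = -(1-p) by ring, Real.rpow_neg ht.le]
  simp only [G3]
  rw [hT3, hT4]
  have e1 : (1:ℝ) - 1 * (1 - (1-z)^p) = (1-z)^p := by ring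
  have e2 : (1:ℝ) - 1 * (1 - (1-z)^(1-p)) = (1-z)^(1-p) := by ring
  rw [e1, e2]
  exact aux3 p v w ((1-z)^(1-p)) ((1-z)^p) (1 - v * (1 - (1-z)^(1-p)))
    (1 - w * (1 - (1-z)^p)) hT1p.ne' hT2p.ne' hA.ne' hBw.ne'
end

section
/- Let 0 < p < 1 with p ≠ 1/2. The unique formal power series solution E(z) of the Bernoulli differential equation E'(z) = (2p/(1-z)) E(z) + (1-p) E(z)², E(0) = 1, is E(z) = (1-2p) / ((1-p)(1-z) - p(1-z)^{2p}). -/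
open Real Filter Topology Set

noncomputable def Dfun (p z : ℝ) : ℝ := (1 - p) * (1 - z) - p * (1 - z) ^ (2 * p)

lemma hasDerivAt_Dfun (p z : ℝ) (hz : z < 1) :
    HasDerivAt (Dfun p) (-(1 - p) + 2 * p * p * (1 - z) ^ (2 * p - 1)) z := by
  have h0 : (0:ℝ) < 1 - z := by linarith
  have h1 : HasDerivAt (fun z : ℝ => 1 - z) (-1) z := by
    simpa using (hasDerivAt_id z).const_sub 1
  have h2 : HasDerivAt (fun z : ℝ => (1 - z) ^ (2 * p))
      (2 * p * (1 - z) ^ (2 * p - 1) * (-1)) z := by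
    have := (Real.hasDerivAt_rpow_const (x := 1 - z) (p := 2 * p) (Or.inl h0.ne')).comp z h1
    exact this
  have h3 := (h1.const_mul (1 - p)).sub (h2.const_mul p)
  refine HasDerivAt.congr_deriv h3 ?_
  ring

lemma key_id (p z : ℝ) (hz : z < 1) :
    2 * p * Dfun p z + (-(1 - p) + 2 * p * p * (1 - z) ^ (2 * p - 1)) * (1 - z)
      = -(1 - p) * (1 - 2 * p) * (1 - z) := by
  have h0 : (0:ℝ) < 1 - z := by linarith
  have hA : (1 - z) ^ (2 * p) = (1 - z) ^ (2 * p - 1) * (1 - z) := by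
    have h := Real.rpow_add_one h0.ne' (2 * p - 1)
    rw [show 2 * p - 1 + 1 = 2 * p by ring] at h
    exact h
  unfold Dfun
  rw [hA]; ring

lemma zero_of_ode {a u : ℝ → ℝ} {c : ℝ} (hc : 0 ≤ c)
    (hu : ∀ t ∈ Icc 0 c, HasDerivAt u (a t * u t) t) (hu0 : u 0 = 0)
    (hacont : ContinuousOn a (Icc 0 c)) : u c = 0 := by
  obtain ⟨K, hK⟩ := isCompact_Icc.exists_bound_of_continuousOn hacont
  have hcont : ContinuousOn u (Icc 0 c) := fun t ht =>
    (hu t ht).continuousAt.continuousWithinAt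
  have := norm_le_gronwallBound_of_norm_deriv_right_le (f := u)
    (f' := fun t => a t * u t) (δ := 0) (K := K) (ε := 0) (a := 0) (b := c)
    hcont (fun t ht => (hu t (Ico_subset_Icc_self ht)).hasDerivWithinAt)
    (by simp [hu0])
    (fun t ht => by
      have h1 : ‖a t * u t‖ = ‖a t‖ * ‖u t‖ := norm_mul _ _
      have h2 : ‖a t‖ ≤ K := hK t (Ico_subset_Icc_self ht)
      nlinarith [norm_nonneg (u t), norm_nonneg (a t)])
  have h := this c (right_mem_Icc.2 hc)
  rw [gronwallBound_ε0_δ0] at h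
  simpa using le_antisymm h (norm_nonneg _) |>.symm ▸ (norm_eq_zero.1 (le_antisymm h (norm_nonneg _)))

/-- For `p ≠ 1/2`, the unique solution of `E' = (2p/(1-z))E + (1-p)E²`, `E(0)=1`,
is `E(z) = (1-2p)/((1-p)(1-z) - p(1-z)^{2p})`. -/
theorem stmt5 (p : ℝ) (hp0 : 0 < p) (hp1 : p < 1) (hp : p ≠ 1 / 2) :
    ((∃ ε > (0 : ℝ),
        ((1 - 2 * p) / ((1 - p) * (1 - (0 : ℝ)) - p * (1 - (0 : ℝ)) ^ (2 * p)) = 1) ∧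
        ∀ z ∈ Ioo (-ε) ε,
          HasDerivAt (fun z : ℝ => (1 - 2 * p) / ((1 - p) * (1 - z) - p * (1 - z) ^ (2 * p)))
            (2 * p / (1 - z) *
                ((1 - 2 * p) / ((1 - p) * (1 - z) - p * (1 - z) ^ (2 * p))) +
              (1 - p) *
                ((1 - 2 * p) / ((1 - p) * (1 - z) - p * (1 - z) ^ (2 * p))) ^ 2) z)) ∧
    ∀ (f : ℝ → ℝ) (δ : ℝ), 0 < δ → δ ≤ 1 →
      (∀ z ∈ Ioo (-δ) δ, HasDerivAt f (2 * p / (1 - z) * f z + (1 - p) * (f z) ^ 2) z) →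
      f 0 = 1 →
      ∀ z ∈ Ioo (-δ) δ,
        f z = (1 - 2 * p) / ((1 - p) * (1 - z) - p * (1 - z) ^ (2 * p)) := by
  have hp2 : 1 - 2 * p ≠ 0 := by
    intro h; exact hp (by linarith)
  have hD0 : Dfun p 0 = 1 - 2 * p := by
    simp [Dfun, Real.one_rpow]; ring
  have heval : (1 - 2 * p) / ((1 - p) * (1 - (0 : ℝ)) - p * (1 - (0 : ℝ)) ^ (2 * p)) = 1 := by
    have h : (1 - p) * (1 - (0 : ℝ)) - p * (1 - (0 : ℝ)) ^ (2 * p) = 1 - 2 * p := hD0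
    rw [h, div_self hp2]
  constructor
  · -- existence
    have hcont : ContinuousAt (Dfun p) 0 := (hasDerivAt_Dfun p 0 (by norm_num)).continuousAt
    have hne : ∀ᶠ z in 𝓝 (0:ℝ), Dfun p z ≠ 0 := hcont.eventually_ne (hD0 ▸ hp2)
    rw [Metric.eventually_nhds_iff_ball] at hne
    obtain ⟨ε₀, hε₀, hball⟩ := hne
    refine ⟨min ε₀ (1/2), by positivity, heval, ?_⟩
    intro z hz
    have hz1 : z < 1 := by
      have h2 : z < 1/2 := lt_of_lt_of_le hz.2 (min_le_right _ _)
      linarith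
    have hDne : Dfun p z ≠ 0 := by
      apply hball
      rw [Metric.mem_ball, Real.dist_eq, sub_zero, abs_lt]
      exact ⟨lt_of_le_of_lt (neg_le_neg (min_le_left _ _)) hz.1,
        lt_of_lt_of_le hz.2 (min_le_left _ _)⟩
    have h0 : (0:ℝ) < 1 - z := by linarith
    have h1ne : (1:ℝ) - z ≠ 0 := h0.ne'
    have hD := hasDerivAt_Dfun p z hz1
    have hg := (hasDerivAt_const z (1 - 2 * p)).div hD hDne
    have hI := key_id p z hz1
    have hgoal : 2 * p / (1 - z) * ((1 - 2 * p) / Dfun p z)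
        + (1 - p) * ((1 - 2 * p) / Dfun p z) ^ 2
        = (0 * Dfun p z - (1 - 2 * p) * (-(1 - p) + 2 * p * p * (1 - z) ^ (2 * p - 1)))
            / (Dfun p z) ^ 2 := by
      field_simp
      linear_combination (1 - 2 * p) * hI
    show HasDerivAt (fun z : ℝ => (1 - 2 * p) / Dfun p z)
      (2 * p / (1 - z) * ((1 - 2 * p) / Dfun p z)
        + (1 - p) * ((1 - 2 * p) / Dfun p z) ^ 2) z
    rw [hgoal]
    exact hg
  · -- uniqueness
    intro f δ hδ0 hδ1 hf' hf0 z hz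
    set u : ℝ → ℝ := fun t => f t * Dfun p t - (1 - 2 * p) with hu_def
    have hlt1 : ∀ t ∈ Ioo (-δ) δ, t < 1 := fun t ht => lt_of_lt_of_le ht.2 hδ1
    have hu' : ∀ t ∈ Ioo (-δ) δ, HasDerivAt u ((1 - p) * f t * u t) t := by
      intro t ht
      have h1t : (0:ℝ) < 1 - t := by have := hlt1 t ht; linarith
      have hD := hasDerivAt_Dfun p t (hlt1 t ht)
      have h := ((hf' t ht).mul hD).sub_const (1 - 2 * p)
      refine HasDerivAt.congr_deriv h ?_
      have hI := key_id p t (hlt1 t ht)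
      field_simp
      linear_combination (f t) * hI
    have hu0 : u 0 = 0 := by
      simp [hu_def, hf0, hD0]
    have hcf : ∀ t ∈ Ioo (-δ) δ, ContinuousAt f t := fun t ht => (hf' t ht).continuousAt
    have huz : u z = 0 := by
      rcases le_or_gt 0 z with hz0 | hz0
      · have hsub : Icc 0 z ⊆ Ioo (-δ) δ := fun t ht =>
          ⟨by have := ht.1; linarith, lt_of_le_of_lt ht.2 hz.2⟩
        exact zero_of_ode (a := fun t => (1 - p) * f t) hz0
          (fun t ht => hu' t (hsub ht)) hu0
          (fun t ht => (continuousAt_const.mul (hcf t (hsub ht))).continuousWithinAt)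
      · have hsub : ∀ s ∈ Icc (0:ℝ) (-z), -s ∈ Ioo (-δ) δ := by
          intro s hs
          have h1 := hs.1; have h2 := hs.2
          have h3 := hz.1
          exact ⟨by linarith, by linarith⟩
        have key := zero_of_ode (a := fun s => -((1 - p) * f (-s))) (u := fun s => u (-s))
          (c := -z) (by linarith)
          (fun s hs => by
            have hmem := hsub s hs
            have hcomp := (hu' (-s) hmem).comp s (hasDerivAt_neg s)
            refine HasDerivAt.congr_deriv hcomp ?_
            ring)
          (by simpa using hu0)
          (fun s hs => by
            have hmem := hsub s hs
            exact ((continuousAt_const.mul ((hcf (-s) hmem).comp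
              continuous_neg.continuousAt)).neg).continuousWithinAt)
        simpa using key
    have hDne : Dfun p z ≠ 0 := by
      intro h
      have h2 : f z * Dfun p z - (1 - 2 * p) = 0 := huz
      rw [h, mul_zero] at h2
      exact hp2 (by linarith)
    have hprod : f z * Dfun p z = 1 - 2 * p := by
      have h2 : f z * Dfun p z - (1 - 2 * p) = 0 := huz
      linarith
    show f z = (1 - 2 * p) / Dfun p z
    rw [eq_div_iff hDne]
    exact hprod
end

section
/- For p = 1/2, the unique formal power series solution E(z) of E'(z) = (1/(1-z)) E(z) + (1/2) E(z)², E(0) = 1, is E(z) = 2 / (2(1-z) - (1-z) log(1/(1-z))). -/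
open Real Filter Topology Set

noncomputable def Dz (z : ℝ) : ℝ := 2 * (1 - z) - (1 - z) * Real.log (1 / (1 - z))

theorem Dz_eq (z : ℝ) : Dz z = (1 - z) * (2 + Real.log (1 - z)) := by
  unfold Dz
  rw [one_div, Real.log_inv]; ring

theorem Dz_deriv {z : ℝ} (hz : 1 - z ≠ 0) :
    HasDerivAt Dz (-(3 + Real.log (1 - z))) z := by
  have h1 : HasDerivAt (fun t : ℝ => 1 - t) (-1) z := by
    exact (hasDerivAt_id z).const_sub 1
  have hlog : HasDerivAt (fun t : ℝ => Real.log (1 - t)) (-(1 - z)⁻¹) z := by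
    exact ((Real.hasDerivAt_log hz).comp z h1).congr_deriv (by ring)
  have : HasDerivAt (fun t : ℝ => (1 - t) * (2 + Real.log (1 - t)))
      ((-1) * (2 + Real.log (1 - z)) + (1 - z) * (0 + -(1 - z)⁻¹)) z := by
    exact h1.mul ((hasDerivAt_const z (2:ℝ)).add hlog)
  have heq : (fun t : ℝ => (1 - t) * (2 + Real.log (1 - t))) = Dz := by
    funext t; rw [Dz_eq]
  rw [heq] at this
  convert this using 1
  field_simp
  ring

theorem Dz_pos {z : ℝ} (hz : z ∈ Ioo (-(1/2) : ℝ) (1/2)) : 0 < Dz z := by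
  rw [Dz_eq]
  have h1 : (1/2 : ℝ) < 1 - z := by linarith [hz.2]
  have h0 : (0:ℝ) < 1 - z := by linarith
  have hlog : Real.log (1/2) < Real.log (1 - z) :=
    Real.log_lt_log (by norm_num) h1
  have hl2 : Real.log (1/2 : ℝ) = -Real.log 2 := by
    rw [one_div, Real.log_inv]
  have h2 : Real.log 2 < 1 := by
    have := Real.log_two_lt_d9; linarith
  nlinarith [hlog]

/-- For `p = 1/2`, the unique solution of `E' = E/(1-z) + E²/2`, `E(0)=1`,
is `E(z) = 2/(2(1-z) - (1-z) log(1/(1-z)))`. -/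
theorem stmt6 :
    ((∃ ε > (0 : ℝ),
        (2 / (2 * (1 - (0 : ℝ)) - (1 - (0 : ℝ)) * Real.log (1 / (1 - (0 : ℝ)))) = 1) ∧
        ∀ z ∈ Ioo (-ε) ε,
          HasDerivAt (fun z : ℝ => 2 / (2 * (1 - z) - (1 - z) * Real.log (1 / (1 - z))))
            (1 / (1 - z) * (2 / (2 * (1 - z) - (1 - z) * Real.log (1 / (1 - z)))) +
              (1 / 2) * (2 / (2 * (1 - z) - (1 - z) * Real.log (1 / (1 - z)))) ^ 2) z)) ∧
    ∀ (f : ℝ → ℝ) (δ : ℝ), 0 < δ → δ ≤ 1 →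
      (∀ z ∈ Ioo (-δ) δ, HasDerivAt f (1 / (1 - z) * f z + (1 / 2) * (f z) ^ 2) z) →
      f 0 = 1 →
      ∀ z ∈ Ioo (-δ) δ,
        f z = 2 / (2 * (1 - z) - (1 - z) * Real.log (1 / (1 - z))) := by
  constructor
  · -- existence
    refine ⟨1/2, by norm_num, by norm_num, ?_⟩
    intro z hz
    have hD : Dz z ≠ 0 := ne_of_gt (Dz_pos hz)
    have hu : (1 - z) ≠ 0 := by
      have := hz.2; intro h; rw [mem_Ioo] at hz; linarith [hz.2]
    have hg : HasDerivAt (fun t : ℝ => 2 / Dz t)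
        ((0 * Dz z - 2 * (-(3 + Real.log (1 - z)))) / (Dz z)^2) z :=
      (hasDerivAt_const z (2:ℝ)).div (Dz_deriv hu) hD
    have heq : (fun t : ℝ => 2 / Dz t) =
        (fun z : ℝ => 2 / (2 * (1 - z) - (1 - z) * Real.log (1 / (1 - z)))) := rfl
    rw [heq] at hg
    convert hg using 1
    show _ = (0 * Dz z - 2 * (-(3 + Real.log (1 - z)))) / (Dz z)^2
    have hDe : (2 * (1 - z) - (1 - z) * Real.log (1 / (1 - z))) = Dz z := rfl
    rw [hDe, Dz_eq]
    have h2 : (1 - z) * (2 + Real.log (1 - z)) ≠ 0 := by rw [← Dz_eq]; exact hD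
    field_simp
    ring
  · -- uniqueness
    intro f δ hδ hδ1 hode hf0 z hz
    set I : Set ℝ := Ioo (-δ) δ with hI
    have h0I : (0:ℝ) ∈ I := by rw [hI, mem_Ioo]; constructor <;> linarith
    have hsub : ∀ t ∈ I, (1 - t) ≠ 0 := by
      intro t ht; rw [hI, mem_Ioo] at ht; intro h; linarith [ht.2]
    have hcf : ∀ t ∈ I, ContinuousAt f t := fun t ht => (hode t ht).continuousAt
    -- antiderivative of f/2
    set F : ℝ → ℝ := fun t => ∫ s in (0:ℝ)..t, f s / 2 with hF
    have hFderiv : ∀ t ∈ I, HasDerivAt F (f t / 2) t := by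
      intro t ht
      have hint : IntervalIntegrable (fun s => f s / 2) MeasureTheory.volume 0 t := by
        apply ContinuousOn.intervalIntegrable
        intro s hs
        have hsI : s ∈ I := by
          have : uIcc (0:ℝ) t ⊆ I := by
            apply (ordConnected_Ioo).uIcc_subset h0I ht
          exact this hs
        exact ((hcf s hsI).div_const 2).continuousWithinAt
      have hm : StronglyMeasurableAtFilter (fun s => f s / 2) (𝓝 t) MeasureTheory.volume := by
        apply ContinuousAt.stronglyMeasurableAtFilter (isOpen_Ioo (a := -δ) (b := δ))
        · intro s hs; exact (hcf s hs).div_const 2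
        · exact ht
      exact intervalIntegral.integral_hasDerivAt_right hint hm ((hcf t ht).div_const 2)
    -- the function G
    set G : ℝ → ℝ := fun t => (f t * Dz t - 2) * Real.exp (-F t) with hG
    have hGderiv : ∀ t ∈ I, HasDerivAt G 0 t := by
      intro t ht
      have hu := hsub t ht
      have hft := hode t ht
      have hDt := Dz_deriv hu
      have hFt := hFderiv t ht
      have hE : HasDerivAt (fun s => Real.exp (-F s)) (Real.exp (-F t) * -(f t / 2)) t :=
        (hFt.neg).exp
      have h1 : HasDerivAt (fun s => f s * Dz s - 2)
          ((1 / (1 - t) * f t + 1 / 2 * f t ^ 2) * Dz t + f t * -(3 + Real.log (1 - t))) t :=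
        (hft.mul hDt).sub_const 2
      have h2 := h1.mul hE
      refine h2.congr_deriv (Eq.symm ?_)
      rw [Dz_eq]
      field_simp
      ring
    -- G is constant
    have hGanywhere : ∀ w ∈ I, G w = G 0 := by
      intro w hw
      rcases le_total 0 w with h0w | hw0
      · have hIcc : Icc (0:ℝ) w ⊆ I := by
          intro s hs; constructor
          · rw [hI, mem_Ioo] at h0I; linarith [hs.1, h0I.1]
          · rw [hI, mem_Ioo] at hw; linarith [hs.2, hw.2]
        have := constant_of_has_deriv_right_zero (f := G) (a := 0) (b := w)
          (fun s hs => ((hGderiv s (hIcc hs)).continuousAt).continuousWithinAt)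
          (fun s hs => ((hGderiv s (hIcc ⟨hs.1, le_of_lt hs.2⟩)).hasDerivWithinAt))
        exact this w ⟨le_refl 0 |>.trans h0w, le_refl w⟩ |>.trans rfl |>.symm ▸
          (this w (by constructor <;> simp [h0w]))
      · have hIcc : Icc w (0:ℝ) ⊆ I := by
          intro s hs; constructor
          · rw [hI, mem_Ioo] at hw; linarith [hs.1, hw.1]
          · rw [hI, mem_Ioo] at h0I; linarith [hs.2, h0I.2]
        have := constant_of_has_deriv_right_zero (f := G) (a := w) (b := 0)
          (fun s hs => ((hGderiv s (hIcc hs)).continuousAt).continuousWithinAt)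
          (fun s hs => ((hGderiv s (hIcc ⟨hs.1, le_of_lt hs.2⟩)).hasDerivWithinAt))
        have h1 := this 0 (by constructor <;> simp [hw0])
        have h2 := this w (by constructor <;> simp [hw0])
        rw [h1, h2]
    have hG0 : G 0 = 0 := by
      have hD0 : Dz 0 = 2 := by unfold Dz; simp
      rw [hG]; simp [hf0, hD0]
    have hGz := (hGanywhere z hz).trans hG0
    rw [hG] at hGz
    simp only at hGz
    have hexp : Real.exp (-F z) ≠ 0 := Real.exp_ne_zero _
    have hfDz : f z * Dz z - 2 = 0 := by
      rcases mul_eq_zero.mp hGz with h | h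
      · exact h
      · exact absurd h hexp
    have hDz : Dz z ≠ 0 := by
      intro h; rw [h] at hfDz; norm_num at hfDz
    have : f z = 2 / Dz z := by
      field_simp
      linarith [hfDz]
    exact this
end

section
/- Let 0 < p < 1 and define α_1 = 1/(p+1), β_r = (rp + r − 1) α_r, and for r ≥ 2, α_r = (p/((r−1)(p+1))) Σ_{r_0=0}^{r−2} Σ_{r_1=0}^{r−1−r_0} multinomial(r−1; r_0, r_1, r−1−r_0−r_1) α_{r_0+1} β_{r_1} β_{r−1−r_0−r_1}, with α_0 = −1 and β_0 = 1. Then α_r = (r−1)! p^{r−1} C(r(p+1)−2, r−1) / (p+1)^{2r−1} for all r ≥ 1. -/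
open Real Filter Topology Set

lemma gchoose_one (x : ℝ) : gchoose x 1 = x := by simp [gchoose]

lemma gchoose_absorb (x : ℝ) (n : ℕ) :
    gchoose x (n+1) = x / (n+1) * gchoose (x-1) n := by
  unfold gchoose
  rw [Finset.prod_range_succ']
  have h : ∀ i ∈ Finset.range n, x - ((i:ℕ)+1 : ℕ) = (x - 1) - i := by
    intro i _; push_cast; ring
  rw [Finset.prod_congr rfl h]
  have hfac : ((Nat.factorial (n+1) : ℝ)) = ((n:ℝ)+1) * Nat.factorial n := by
    push_cast [Nat.factorial_succ]; ring
  rw [hfac]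
  have h1 : ((n:ℝ)+1) ≠ 0 := by positivity
  have h2 : (Nat.factorial n : ℝ) ≠ 0 := by positivity
  push_cast
  field_simp
  ring

lemma gchoose_pascal (x : ℝ) (n : ℕ) :
    gchoose x (n+1) = gchoose (x-1) (n+1) + gchoose (x-1) n := by
  unfold gchoose
  rw [Finset.prod_range_succ', Finset.prod_range_succ]
  have h : ∀ i ∈ Finset.range n, x - ((i:ℕ)+1 : ℕ) = (x - 1) - i := by
    intro i _; push_cast; ring
  rw [Finset.prod_congr rfl h]
  have hfac : ((Nat.factorial (n+1) : ℝ)) = ((n:ℝ)+1) * Nat.factorial n := by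
    push_cast [Nat.factorial_succ]; ring
  rw [hfac]
  have h1 : ((n:ℝ)+1) ≠ 0 := by positivity
  have h2 : (Nat.factorial n : ℝ) ≠ 0 := by positivity
  push_cast
  field_simp
  ring


noncomputable def Bb (t x : ℝ) (n : ℕ) : ℝ := gchoose (x + t * n) n

noncomputable def Aa (t x : ℝ) (n : ℕ) : ℝ :=
  if n = 0 then 1 else (x / n) * gchoose (x + t * n - 1) (n - 1)

lemma Bb_zero (t x : ℝ) : Bb t x 0 = 1 := by simp [Bb, gchoose_zero]

lemma Aa_zero (t x : ℝ) : Aa t x 0 = 1 := by simp [Aa]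

lemma Bb_one (t x : ℝ) : Bb t x 1 = x + t := by simp [Bb, gchoose_one]

lemma Bb_succ (t x : ℝ) (n : ℕ) :
    Bb t x (n+1) = Aa t x (n+1) + t * Bb t (x + t - 1) n := by
  unfold Bb Aa
  rw [if_neg (Nat.succ_ne_zero n)]
  have e0 : x + t * ((n+1 : ℕ) : ℝ) = x + t * ((n:ℝ)+1) := by push_cast; ring
  rw [e0, gchoose_absorb]
  have e1 : x + t * ((n:ℝ)+1) - 1 = (x + t - 1) + t * (n : ℕ) := by ring
  have e2 : ((n+1 : ℕ) : ℝ) = (n:ℝ) + 1 := by push_cast; ring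
  rw [e1, e2, Nat.add_sub_cancel]
  have h1 : ((n:ℝ)+1) ≠ 0 := by positivity
  field_simp

lemma nAa (t x : ℝ) (n : ℕ) :
    ((n:ℝ)+1) * Aa t x (n+1) = x * Bb t (x + t - 1) n := by
  unfold Bb Aa
  rw [if_neg (Nat.succ_ne_zero n)]
  have e1 : x + t * ((n+1 : ℕ) : ℝ) - 1 = (x + t - 1) + t * (n : ℕ) := by push_cast; ring
  have e2 : ((n+1 : ℕ) : ℝ) = (n:ℝ) + 1 := by push_cast; ring
  rw [e1, e2, Nat.add_sub_cancel]
  have h1 : ((n:ℝ)+1) ≠ 0 := by positivity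
  field_simp
  try ring

lemma Bb_pascal (t x : ℝ) (n : ℕ) :
    Bb t (x+1) (n+1) = Bb t x (n+1) + Bb t (x+t) n := by
  unfold Bb
  have e0 : x + 1 + t * ((n+1 : ℕ) : ℝ) = (x + t * ((n+1:ℕ):ℝ)) + 1 := by ring
  rw [e0, gchoose_pascal]
  have e1 : x + t * ((n+1:ℕ):ℝ) + 1 - 1 = x + t * ((n+1:ℕ):ℝ) := by ring
  have e2 : x + t + t * (n : ℕ) = x + t * ((n+1:ℕ):ℝ) := by push_cast; ring
  rw [e1, e2]


lemma R12 (t : ℝ) : ∀ n : ℕ,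
    (∀ x y : ℝ, ∑ k ∈ Finset.range (n+1), Aa t x k * Aa t y (n-k) = Aa t (x+y) n) ∧
    (∀ x y : ℝ, ∑ k ∈ Finset.range (n+1), Aa t x k * Bb t y (n-k) = Bb t (x+y) n) := by
  intro n
  induction n with
  | zero =>
      constructor <;> intro x y <;>
        simp [Finset.sum_range_one, Aa_zero, Bb_zero]
  | succ n ih =>
      obtain ⟨ih1, ih2⟩ := ih
      have key : ∀ x y : ℝ,
          ∑ k ∈ Finset.range (n+2), (k:ℝ) * (Aa t x k * Aa t y (n+1-k))
            = x * Bb t (x+y+t-1) n := by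
        intro x y
        rw [Finset.sum_range_succ']
        simp only [Nat.cast_zero, zero_mul, add_zero]
        have step : ∀ i ∈ Finset.range (n+1),
            ((i+1 : ℕ):ℝ) * (Aa t x (i+1) * Aa t y (n+1-(i+1)))
              = x * (Aa t y (n-i) * Bb t (x+t-1) i) := by
          intro i _
          have h1 : n+1-(i+1) = n-i := by omega
          have h2 : ((i+1 : ℕ):ℝ) = (i:ℝ)+1 := by push_cast; ring
          rw [h1, h2, ← mul_assoc, nAa t x i]
          ring
        rw [Finset.sum_congr rfl step, ← Finset.mul_sum]
        have refl : ∑ i ∈ Finset.range (n+1), Aa t y (n-i) * Bb t (x+t-1) i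
            = ∑ i ∈ Finset.range (n+1), Aa t y i * Bb t (x+t-1) (n-i) := by
          rw [← Finset.sum_range_reflect]
          apply Finset.sum_congr rfl
          intro j hj
          have hj' : j ≤ n := by
            have := Finset.mem_range.mp hj; omega
          have h1 : n + 1 - 1 - j = n - j := by omega
          have h2 : n - (n - j) = j := by omega
          rw [h1, h2]
        rw [refl, ih2 y (x+t-1), show y+(x+t-1) = x+y+t-1 by ring]
      have hA : ∀ x y : ℝ,
          ∑ k ∈ Finset.range (n+2), Aa t x k * Aa t y (n+1-k) = Aa t (x+y) (n+1) := by
        intro x y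
        apply mul_left_cancel₀ (show ((n:ℝ)+1) ≠ 0 by positivity)
        rw [Finset.mul_sum]
        have split : ∀ k ∈ Finset.range (n+2),
            ((n:ℝ)+1) * (Aa t x k * Aa t y (n+1-k)) =
            (k:ℝ) * (Aa t x k * Aa t y (n+1-k))
              + ((n+1-k : ℕ):ℝ) * (Aa t x k * Aa t y (n+1-k)) := by
          intro k hk
          have hk' : k ≤ n+1 := by
            have := Finset.mem_range.mp hk; omega
          have hc : ((n+1-k : ℕ):ℝ) = ((n:ℝ)+1) - k := by
            push_cast [Nat.cast_sub hk']; ring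
          rw [hc]; ring
        rw [Finset.sum_congr rfl split, Finset.sum_add_distrib]
        have second : ∑ k ∈ Finset.range (n+2),
            ((n+1-k:ℕ):ℝ) * (Aa t x k * Aa t y (n+1-k))
            = ∑ k ∈ Finset.range (n+2), (k:ℝ) * (Aa t y k * Aa t x (n+1-k)) := by
          rw [← Finset.sum_range_reflect]
          apply Finset.sum_congr rfl
          intro j hj
          have hj' : j ≤ n+1 := by
            have := Finset.mem_range.mp hj; omega
          have h1 : n+2-1-j = n+1-j := by omega
          have h2 : n+1-(n+1-j) = j := by omega
          rw [h1, h2]; ring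
        rw [key x y, second, key y x, nAa t (x+y) n,
          show y+x+t-1 = x+y+t-1 by ring]
        ring
      refine ⟨hA, ?_⟩
      intro x y
      rw [Finset.sum_range_succ]
      have split : ∀ k ∈ Finset.range (n+1), Aa t x k * Bb t y (n+1-k)
          = Aa t x k * Aa t y (n+1-k) + t * (Aa t x k * Bb t (y+t-1) (n-k)) := by
        intro k hk
        have hk' : k ≤ n := by
          have := Finset.mem_range.mp hk; omega
        have h1 : n+1-k = (n-k)+1 := by omega
        rw [h1, Bb_succ]
        have h2 : (n-k)+1 = n+1-k := by omega
        rw [h2]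
        ring
      rw [Finset.sum_congr rfl split, Finset.sum_add_distrib, ← Finset.mul_sum]
      have e1 : ∑ k ∈ Finset.range (n+1), Aa t x k * Aa t y (n+1-k)
          = ∑ k ∈ Finset.range (n+2), Aa t x k * Aa t y (n+1-k)
            - Aa t x (n+1) * Aa t y 0 := by
        rw [Finset.sum_range_succ (fun k => Aa t x k * Aa t y (n+1-k)) (n+1),
          Nat.sub_self]
        ring
      rw [e1, hA x y, ih2 x (y+t-1), Nat.sub_self, Bb_zero, Aa_zero,
        Bb_succ t (x+y) n, show x+(y+t-1) = (x+y)+t-1 by ring]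
      ring


lemma R2 (t : ℝ) (n : ℕ) (x y : ℝ) :
    ∑ k ∈ Finset.range (n+1), Aa t x k * Bb t y (n-k) = Bb t (x+y) n :=
  (R12 t n).2 x y

noncomputable def Uu (t s : ℝ) (n : ℕ) : ℝ :=
  ∑ k ∈ Finset.range (n+1), Bb t s k * Bb t 0 (n-k)

noncomputable def Vv (t s : ℝ) (n : ℕ) : ℝ :=
  ∑ k ∈ Finset.range (n+1), Bb t s k * Uu t 0 (n-k)

lemma Uu_zero (t s : ℝ) : Uu t s 0 = 1 := by
  simp [Uu, Finset.sum_range_one, Bb_zero]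

lemma Vv_zero (t s : ℝ) : Vv t s 0 = 1 := by
  simp [Vv, Finset.sum_range_one, Bb_zero, Uu_zero]

lemma Uu_one (t s : ℝ) : Uu t s 1 = s + 2*t := by
  rw [Uu, Finset.sum_range_succ, Finset.sum_range_one]
  simp only [Nat.sub_self, Nat.sub_zero]
  rw [Bb_zero, Bb_one, Bb_one, Bb_zero]
  ring

lemma Vv_one (t s : ℝ) : Vv t s 1 = s + 3*t := by
  rw [Vv, Finset.sum_range_succ, Finset.sum_range_one]
  simp only [Nat.sub_self, Nat.sub_zero]
  rw [Bb_zero, Bb_one, Uu_one, Uu_zero]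
  ring

lemma R3' (t s : ℝ) (n : ℕ) :
    Uu t s (n+1) = Bb t s (n+1) + t * Uu t (s+t-1) n := by
  rw [Uu, Finset.sum_range_succ']
  have step : ∀ j ∈ Finset.range (n+1),
      Bb t s (j+1) * Bb t 0 (n+1-(j+1))
        = Aa t s (j+1) * Bb t 0 (n+1-(j+1)) + t * (Bb t (s+t-1) j * Bb t 0 (n-j)) := by
    intro j _
    have h1 : n+1-(j+1) = n-j := by omega
    rw [Bb_succ, h1]
    ring
  rw [Finset.sum_congr rfl step, Finset.sum_add_distrib, ← Finset.mul_sum]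
  have e0 : Bb t s 0 * Bb t 0 (n+1-0) = Aa t s 0 * Bb t 0 (n+1-0) := by
    rw [Bb_zero, Aa_zero]
  rw [e0]
  have e1 : (∑ j ∈ Finset.range (n+1), Aa t s (j+1) * Bb t 0 (n+1-(j+1)))
      + Aa t s 0 * Bb t 0 (n+1-0)
      = ∑ k ∈ Finset.range (n+2), Aa t s k * Bb t 0 (n+1-k) := by
    exact (Finset.sum_range_succ' (fun k => Aa t s k * Bb t 0 (n+1-k)) (n+1)).symm
  rw [add_right_comm, e1, R2 t (n+1) s 0, add_zero]
  rfl

lemma AU (t : ℝ) : ∀ (M : ℕ) (c s : ℝ),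
    ∑ k ∈ Finset.range (M+1), Aa t c k * Uu t s (M-k) = Uu t (c+s) M := by
  intro M
  induction M with
  | zero =>
      intro c s
      simp [Finset.sum_range_one, Aa_zero, Uu_zero]
  | succ M ih =>
      intro c s
      rw [Finset.sum_range_succ]
      have split : ∀ k ∈ Finset.range (M+1),
          Aa t c k * Uu t s (M+1-k)
            = Aa t c k * Bb t s (M+1-k) + t * (Aa t c k * Uu t (s+t-1) (M-k)) := by
        intro k hk
        have hk' : k ≤ M := by
          have := Finset.mem_range.mp hk; omega
        have h1 : M+1-k = (M-k)+1 := by omega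
        rw [h1, R3']
        have h2 : (M-k)+1 = M+1-k := by omega
        rw [h2]
        ring
      rw [Finset.sum_congr rfl split, Finset.sum_add_distrib, ← Finset.mul_sum, ih c (s+t-1)]
      have e1 : ∑ k ∈ Finset.range (M+1), Aa t c k * Bb t s (M+1-k)
          = ∑ k ∈ Finset.range (M+2), Aa t c k * Bb t s (M+1-k)
            - Aa t c (M+1) * Bb t s 0 := by
        rw [Finset.sum_range_succ (fun k => Aa t c k * Bb t s (M+1-k)) (M+1),
          Nat.sub_self]
        ring
      rw [e1, R2 t (M+1) c s, Nat.sub_self, Uu_zero, Bb_zero,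
        R3' t (c+s) M, show c+(s+t-1) = (c+s)+t-1 by ring]
      ring

lemma conv_BB (t : ℝ) : ∀ (n : ℕ) (c d : ℝ),
    ∑ k ∈ Finset.range (n+1), Bb t c k * Bb t d (n-k) = Uu t (c+d) n := by
  intro n
  induction n with
  | zero =>
      intro c d
      simp [Finset.sum_range_one, Bb_zero, Uu_zero]
  | succ n ih =>
      intro c d
      rw [Finset.sum_range_succ']
      have step : ∀ j ∈ Finset.range (n+1),
          Bb t c (j+1) * Bb t d (n+1-(j+1))
            = Aa t c (j+1) * Bb t d (n+1-(j+1)) + t * (Bb t (c+t-1) j * Bb t d (n-j)) := by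
        intro j _
        have h1 : n+1-(j+1) = n-j := by omega
        rw [Bb_succ, h1]
        ring
      rw [Finset.sum_congr rfl step, Finset.sum_add_distrib, ← Finset.mul_sum]
      have e0 : Bb t c 0 * Bb t d (n+1-0) = Aa t c 0 * Bb t d (n+1-0) := by
        rw [Bb_zero, Aa_zero]
      rw [e0]
      have e1 : (∑ j ∈ Finset.range (n+1), Aa t c (j+1) * Bb t d (n+1-(j+1)))
          + Aa t c 0 * Bb t d (n+1-0)
          = ∑ k ∈ Finset.range (n+2), Aa t c k * Bb t d (n+1-k) := by
        exact (Finset.sum_range_succ' (fun k => Aa t c k * Bb t d (n+1-k)) (n+1)).symm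
      rw [add_right_comm, e1, R2 t (n+1) c d, ih (c+t-1) d,
        R3' t (c+d) n, show c+t-1+d = (c+d)+t-1 by ring]

lemma R4' (t s : ℝ) (n : ℕ) :
    Vv t s (n+1) = Uu t s (n+1) + t * Vv t (s+t-1) n := by
  rw [Vv, Finset.sum_range_succ']
  have step : ∀ j ∈ Finset.range (n+1),
      Bb t s (j+1) * Uu t 0 (n+1-(j+1))
        = Aa t s (j+1) * Uu t 0 (n+1-(j+1)) + t * (Bb t (s+t-1) j * Uu t 0 (n-j)) := by
    intro j _
    have h1 : n+1-(j+1) = n-j := by omega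
    rw [Bb_succ, h1]
    ring
  rw [Finset.sum_congr rfl step, Finset.sum_add_distrib, ← Finset.mul_sum]
  have e0 : Bb t s 0 * Uu t 0 (n+1-0) = Aa t s 0 * Uu t 0 (n+1-0) := by
    rw [Bb_zero, Aa_zero]
  rw [e0]
  have e1 : (∑ j ∈ Finset.range (n+1), Aa t s (j+1) * Uu t 0 (n+1-(j+1)))
      + Aa t s 0 * Uu t 0 (n+1-0)
      = ∑ k ∈ Finset.range (n+2), Aa t s k * Uu t 0 (n+1-k) := by
    exact (Finset.sum_range_succ' (fun k => Aa t s k * Uu t 0 (n+1-k)) (n+1)).symm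
  rw [add_right_comm, e1, AU t (n+1) s 0, add_zero]
  rfl

lemma conv_BU (t : ℝ) : ∀ (n : ℕ) (c s : ℝ),
    ∑ k ∈ Finset.range (n+1), Bb t c k * Uu t s (n-k) = Vv t (c+s) n := by
  intro n
  induction n with
  | zero =>
      intro c s
      simp [Finset.sum_range_one, Bb_zero, Uu_zero, Vv_zero]
  | succ n ih =>
      intro c s
      rw [Finset.sum_range_succ']
      have step : ∀ j ∈ Finset.range (n+1),
          Bb t c (j+1) * Uu t s (n+1-(j+1))
            = Aa t c (j+1) * Uu t s (n+1-(j+1)) + t * (Bb t (c+t-1) j * Uu t s (n-j)) := by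
        intro j _
        have h1 : n+1-(j+1) = n-j := by omega
        rw [Bb_succ, h1]
        ring
      rw [Finset.sum_congr rfl step, Finset.sum_add_distrib, ← Finset.mul_sum]
      have e0 : Bb t c 0 * Uu t s (n+1-0) = Aa t c 0 * Uu t s (n+1-0) := by
        rw [Bb_zero, Aa_zero]
      rw [e0]
      have e1 : (∑ j ∈ Finset.range (n+1), Aa t c (j+1) * Uu t s (n+1-(j+1)))
          + Aa t c 0 * Uu t s (n+1-0)
          = ∑ k ∈ Finset.range (n+2), Aa t c k * Uu t s (n+1-k) := by
        exact (Finset.sum_range_succ' (fun k => Aa t c k * Uu t s (n+1-k)) (n+1)).symm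
      rw [add_right_comm, e1, AU t (n+1) c s, ih (c+t-1) s,
        R4' t (c+s) n, show c+t-1+s = (c+s)+t-1 by ring]


lemma R5 (t : ℝ) : ∀ (n : ℕ) (s : ℝ),
    Bb t (s+1) (n+1) = Uu t s (n+1) + (1-t) * Uu t (s+t) n := by
  intro n
  induction n with
  | zero =>
      intro s
      rw [Bb_one, Uu_one, Uu_zero]
      ring
  | succ n ih =>
      intro s
      have h1 := R3' t s (n+1)
      have h2 := R3' t (s+t) n
      have h3 := ih (s+t-1)
      have h4 := ih s
      have h5 := Bb_pascal t s (n+1)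
      rw [show s+t-1+1 = s+t by ring, show s+t-1+t = s+2*t-1 by ring] at h3
      rw [show s+t+t-1 = s+2*t-1 by ring] at h2
      -- goal : Bb t (s+1) (n+2) = Uu t s (n+2) + (1-t) * Uu t (s+t) (n+1)
      linear_combination h5 - h1 - (1-t) * h2 + t * h3

lemma DERIV (t : ℝ) : ∀ (n : ℕ) (c : ℝ),
    ((n:ℝ)+1) * Bb t (c+2) (n+1) = (c+2) * Uu t (c+t+1) n + t * Vv t (c+t) n := by
  intro n
  induction n with
  | zero =>
      intro c
      rw [Bb_one, Uu_zero, Vv_zero]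
      push_cast
      ring
  | succ n ih =>
      intro c
      have h1 := Bb_succ t (c+2) (n+1)
      have h2 := nAa t (c+2) (n+1)
      have h3 := R3' t (c+t+1) n
      have h4 := R4' t (c+t) n
      have h5 := ih (c+t-1)
      have h6 := R5 t n (c+t)
      rw [show c+t+t = c+2*t by ring] at h6
      rw [show c+2+t-1 = c+t+1 by ring] at h1 h2
      rw [show c+t+1+t-1 = c+2*t by ring] at h3
      rw [show c+t+t-1 = c+2*t-1 by ring] at h4
      rw [show c+t-1+2 = c+t+1 by ring, show c+t-1+t+1 = c+2*t by ring,
        show c+t-1+t = c+2*t-1 by ring] at h5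
      push_cast at h2 h5 ⊢
      linear_combination ((n:ℝ)+2) * h1 + h2 - (c+2) * h3 - t * h4 + t * h5 + t * h6

lemma MAIN (t : ℝ) : ∀ (n : ℕ) (c : ℝ),
    t * Vv t c (n+1) - 2 * Uu t (c+1) (n+1) - (t-2) * Bb t (c+2) (n+1)
      = (t-1) * ((t-2) * Uu t (c+t+1) n + t * Vv t (c+t) n) := by
  intro n
  induction n with
  | zero =>
      intro c
      rw [Vv_one, Uu_one, Bb_one, Uu_zero, Vv_zero]
      ring
  | succ n ih =>
      intro c
      have k1 := R4' t c (n+1)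
      have k2 := R3' t (c+1) (n+1)
      have k3 := Bb_pascal t (c+1) (n+1)
      have k4 := R3' t (c+t+1) n
      have k5 := R4' t (c+t) n
      have k6 := ih (c+t-1)
      have k7 := R5 t (n+1) c
      rw [show c+1+t-1 = c+t by ring] at k2
      rw [show c+1+1 = c+2 by ring, show c+1+t = c+t+1 by ring] at k3
      rw [show c+t+1+t-1 = c+2*t by ring] at k4
      rw [show c+t+t-1 = c+2*t-1 by ring] at k5
      rw [show c+t-1+1 = c+t by ring, show c+t-1+2 = c+t+1 by ring,
        show c+t-1+t+1 = c+2*t by ring, show c+t-1+t = c+2*t-1 by ring] at k6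
      linear_combination t * k1 - 2 * k2 - (t-2) * k3 + t * k6
        - (t-1) * (t-2) * k4 - t * (t-1) * k5 - t * k7

lemma key_ident (t : ℝ) (n : ℕ) :
    t * Vv t (t-4) (n+1) - 2 * Uu t (t-3) (n+1)
      = ((t-1) * ((n:ℝ)+1) + (t-2)) * Bb t (t-2) (n+1) := by
  have h1 := MAIN t n (t-4)
  have h2 := DERIV t n (t-4)
  rw [show t-4+1 = t-3 by ring, show t-4+2 = t-2 by ring,
    show t-4+t+1 = 2*t-3 by ring, show t-4+t = 2*t-4 by ring] at h1
  rw [show t-4+2 = t-2 by ring, show t-4+t+1 = 2*t-3 by ring,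
    show t-4+t = 2*t-4 by ring] at h2
  linear_combination h1 - (t-1) * h2


lemma Bb_absorb (t : ℝ) (m : ℕ) :
    ((m:ℝ)+1) * Bb t (-1) (m+1) = (t*((m:ℝ)+1) - 1) * Bb t (t-2) m := by
  unfold Bb
  have e0 : (-1 : ℝ) + t * ((m+1:ℕ):ℝ) = (t*((m:ℝ)+1) - 1) := by push_cast; ring
  rw [e0, gchoose_absorb]
  have e1 : t*((m:ℝ)+1) - 1 - 1 = (t-2) + t*(m:ℕ) := by push_cast; ring
  rw [e1]
  have h1 : ((m:ℝ)+1) ≠ 0 := by positivity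
  field_simp

/-- The singularity coefficients `α_r` of the preferential attraction model satisfy
`α_r = (r−1)! p^{r−1} C(r(p+1)−2, r−1) / (p+1)^{2r−1}`. -/
theorem stmt13 (p : ℝ) (hp0 : 0 < p) (hp1 : p < 1) (α β : ℕ → ℝ)
    (ha0 : α 0 = -1) (ha1 : α 1 = 1 / (p + 1))
    (hb : ∀ r : ℕ, β r = ((r : ℝ) * p + r - 1) * α r)
    (hrec : ∀ r : ℕ, 2 ≤ r → α r =
      (p / (((r : ℝ) - 1) * (p + 1))) *
        ∑ r0 ∈ Finset.range (r - 1), ∑ r1 ∈ Finset.range (r - r0),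
          ((Nat.factorial (r - 1) : ℝ) /
              ((Nat.factorial r0 : ℝ) * (Nat.factorial r1 : ℝ) *
                (Nat.factorial (r - 1 - r0 - r1) : ℝ))) *
            α (r0 + 1) * β r1 * β (r - 1 - r0 - r1)) :
    ∀ r : ℕ, 1 ≤ r →
      α r = (Nat.factorial (r - 1) : ℝ) * p ^ (r - 1) *
        gchoose ((r : ℝ) * (p + 1) - 2) (r - 1) / (p + 1) ^ (2 * r - 1) := by
  have hp : p ≠ 0 := ne_of_gt hp0
  have ht0 : (0:ℝ) < p + 1 := by linarith
  have ht : (p + 1) ≠ 0 := ne_of_gt ht0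
  set q : ℝ := p / (p+1)^2 with hq
  have hq0 : q ≠ 0 := by
    rw [hq]; positivity
  have hqt : q * (p+1)^2 = p := by
    rw [hq]; field_simp
  clear_value q
  suffices H : ∀ r : ℕ, 1 ≤ r → α r =
      (Nat.factorial (r-1) : ℝ) * q^(r-1) * Bb (p+1) (p+1-2) (r-1) / (p+1) by
    intro r hr
    obtain ⟨m, rfl⟩ : ∃ m, r = m + 1 := ⟨r - 1, by omega⟩
    have h1 := H (m+1) hr
    rw [Nat.add_sub_cancel] at h1 ⊢
    rw [h1]
    have e2 : ((m+1:ℕ):ℝ) * (p+1) - 2 = (p+1-2) + (p+1) * (m:ℕ) := by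
      push_cast; ring
    rw [e2]
    have e3 : 2 * (m+1) - 1 = 2*m+1 := by omega
    rw [e3]
    unfold Bb
    have e4 : (p+1)^(2*m+1) = ((p+1)^2)^m * (p+1) := by
      rw [pow_succ, pow_mul]
    rw [e4]
    have e5 : q^m * ((p+1)^2)^m = p^m := by
      rw [← mul_pow, hqt]
    field_simp
    rw [← e5]; ring
  intro r
  induction r using Nat.strong_induction_on with
  | _ r ih =>
    intro hr
    match r, hr with
    | 1, _ =>
        rw [ha1]
        simp only [Nat.sub_self, pow_zero, Nat.factorial_zero, Bb_zero]
        push_cast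
        ring
    | (n+2), _ =>
        -- induction hypotheses in usable form
        have hup : ∀ k : ℕ, k ≤ n → α (k+1)
            = (Nat.factorial k : ℝ) * q^k * Bb (p+1) (p+1-2) k / (p+1) := by
          intro k hk
          have := ih (k+1) (by omega) (by omega)
          rwa [Nat.add_sub_cancel] at this
        have hb0 : β 0 = 1 := by
          rw [hb 0, ha0]
          push_cast
          ring
        have hbeta : ∀ k : ℕ, 1 ≤ k → k ≤ n+1 →
            β k = (Nat.factorial k : ℝ) * q^(k-1) * Bb (p+1) (-1) k / (p+1) := by
          intro k hk1 hk2
          obtain ⟨m, rfl⟩ : ∃ m, k = m + 1 := ⟨k - 1, by omega⟩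
          rw [hb (m+1), hup m (by omega), Nat.add_sub_cancel]
          have habs := Bb_absorb (p+1) m
          have hfac : (Nat.factorial (m+1) : ℝ) = ((m:ℝ)+1) * Nat.factorial m := by
            push_cast [Nat.factorial_succ]; ring
          rw [hfac]
          have hcast : ((m+1:ℕ):ℝ) * p + ((m+1:ℕ):ℝ) - 1 = (p+1)*((m:ℝ)+1) - 1 := by
            push_cast; ring
          rw [hcast]
          have hm1 : ((m:ℝ)+1) ≠ 0 := by positivity
          field_simp
          linear_combination (-1) * habs
        -- local abbreviations
        set Z : ℕ → ℝ := fun k => if k = 0 then q*(p+1) else q^k * Bb (p+1) (-1) k with hZ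
        set C : ℝ := (Nat.factorial (n+1) : ℝ) / ((p+1)^3 * q^2) with hC
        have hn1 : ((n:ℝ)+1) ≠ 0 := by positivity
        -- pointwise term identity
        have hterm : ∀ r0 r1 : ℕ, r0 ≤ n → r1 ≤ n+1-r0 →
            (Nat.factorial (n+1) : ℝ) /
                ((Nat.factorial r0 : ℝ) * (Nat.factorial r1 : ℝ) *
                  (Nat.factorial (n+1-r0-r1) : ℝ))
              * α (r0+1) * β r1 * β (n+1-r0-r1)
            = C * ((q^r0 * Bb (p+1) (p+1-2) r0) * (Z r1 * Z (n+1-r0-r1))) := by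
          intro r0 r1 h0 h1
          rw [hup r0 h0]
          by_cases e1 : r1 = 0
          · subst e1
            simp only [Nat.sub_zero, hZ, hC]
            simp only [eq_self_iff_true, if_true]
            have hr2 : ¬ (n+1-r0 = 0) := by omega
            rw [if_neg hr2, hb0, hbeta (n+1-r0) (by omega) (by omega)]
            obtain ⟨m2, hm2⟩ : ∃ m2, n+1-r0 = m2+1 := ⟨n-r0, by omega⟩
            rw [hm2, Nat.add_sub_cancel, pow_succ]
            have hf0 : (Nat.factorial 0 : ℝ) = 1 := by norm_num [Nat.factorial]
            rw [hf0]
            have hfr0 : (Nat.factorial r0 : ℝ) ≠ 0 := by positivity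
            have hfm2 : (Nat.factorial (m2+1) : ℝ) ≠ 0 := by positivity
            field_simp
            ring
          · by_cases e2 : n+1-r0-r1 = 0
            · rw [e2]
              simp only [hZ, hC]
              rw [if_neg e1]
              simp only [eq_self_iff_true, if_true]
              rw [hb0, hbeta r1 (by omega) (by omega)]
              obtain ⟨m1, hm1⟩ : ∃ m1, r1 = m1+1 := ⟨r1-1, by omega⟩
              rw [hm1, Nat.add_sub_cancel, pow_succ]
              have hf0 : (Nat.factorial 0 : ℝ) = 1 := by norm_num [Nat.factorial]
              rw [hf0]
              have hfr0 : (Nat.factorial r0 : ℝ) ≠ 0 := by positivity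
              have hfm1 : (Nat.factorial (m1+1) : ℝ) ≠ 0 := by positivity
              field_simp
              ring
            · simp only [hZ, hC]
              rw [if_neg e1, if_neg e2, hbeta r1 (by omega) (by omega),
                hbeta (n+1-r0-r1) (by omega) (by omega)]
              obtain ⟨m1, hm1⟩ : ∃ m1, r1 = m1+1 := ⟨r1-1, by omega⟩
              obtain ⟨m2, hm2⟩ : ∃ m2, n+1-r0-r1 = m2+1 := ⟨n-r0-r1, by omega⟩
              have hm2' : n+1-r0-(m1+1) = m2+1 := by omega
              rw [hm1, hm2', Nat.add_sub_cancel, Nat.add_sub_cancel, pow_succ, pow_succ]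
              have hfr0 : (Nat.factorial r0 : ℝ) ≠ 0 := by positivity
              have hfm1 : (Nat.factorial (m1+1) : ℝ) ≠ 0 := by positivity
              have hfm2 : (Nat.factorial (m2+1) : ℝ) ≠ 0 := by positivity
              field_simp
              ring
        -- inner sum evaluation
        have hinner : ∀ m : ℕ, 1 ≤ m →
            ∑ r1 ∈ Finset.range (m+1), Z r1 * Z (m-r1)
              = q^m * (Uu (p+1) (-2) m
                  + 2*(q*(p+1) - 1) * Bb (p+1) (-1) m) := by
          intro m hm
          obtain ⟨l, rfl⟩ : ∃ l, m = l + 1 := ⟨m-1, by omega⟩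
          have pt : ∀ r1 ∈ Finset.range (l+2), Z r1 * Z (l+1-r1)
              = q^r1 * Bb (p+1) (-1) r1 * (q^(l+1-r1) * Bb (p+1) (-1) (l+1-r1))
                + ((if r1 = 0 then (q*(p+1)-1) * (q^(l+1) * Bb (p+1) (-1) (l+1)) else 0)
                 + (if r1 = l+1 then (q*(p+1)-1) * (q^(l+1) * Bb (p+1) (-1) (l+1)) else 0)) := by
            intro r1 hr1
            have hr1' : r1 ≤ l+1 := by
              have := Finset.mem_range.mp hr1; omega
            by_cases e0 : r1 = 0
            · subst e0
              simp only [Nat.sub_zero, hZ]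
              simp only [eq_self_iff_true, if_true]
              rw [if_neg (by omega : ¬ (l+1 = 0)), if_neg (by omega : ¬ (0 = l+1)),
                Bb_zero, pow_zero]
              ring
            · by_cases e3 : r1 = l+1
              · subst e3
                simp only [Nat.sub_self, hZ]
                simp only [eq_self_iff_true, if_true]
                rw [if_neg (by omega : ¬ (l+1 = 0)), if_neg (by omega : ¬ (l+1 = 0)),
                  Bb_zero, pow_zero]
                ring
              · have hne : ¬ (l+1-r1 = 0) := by omega
                simp only [hZ]
                rw [if_neg e0, if_neg hne, if_neg e0, if_neg e3]
                ring
          rw [Finset.sum_congr rfl pt, Finset.sum_add_distrib, Finset.sum_add_distrib]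
          have p1 : ∑ r1 ∈ Finset.range (l+2),
              q^r1 * Bb (p+1) (-1) r1 * (q^(l+1-r1) * Bb (p+1) (-1) (l+1-r1))
              = q^(l+1) * Uu (p+1) (-2) (l+1) := by
            have recomb : ∀ r1 ∈ Finset.range (l+2),
                q^r1 * Bb (p+1) (-1) r1 * (q^(l+1-r1) * Bb (p+1) (-1) (l+1-r1))
                  = q^(l+1) * (Bb (p+1) (-1) r1 * Bb (p+1) (-1) (l+1-r1)) := by
              intro r1 hr1
              have hr1' : r1 ≤ l+1 := by
                have := Finset.mem_range.mp hr1; omega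
              have hpow : q^r1 * q^(l+1-r1) = q^(l+1) := by
                rw [← pow_add]
                congr 1
                omega
              calc q^r1 * Bb (p+1) (-1) r1 * (q^(l+1-r1) * Bb (p+1) (-1) (l+1-r1))
                  = (q^r1 * q^(l+1-r1)) * (Bb (p+1) (-1) r1 * Bb (p+1) (-1) (l+1-r1)) := by ring
                _ = q^(l+1) * (Bb (p+1) (-1) r1 * Bb (p+1) (-1) (l+1-r1)) := by rw [hpow]
            rw [Finset.sum_congr rfl recomb, ← Finset.mul_sum,
              conv_BB (p+1) (l+1) (-1) (-1), show (-1:ℝ) + -1 = -2 by norm_num]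
          have p2 : ∑ r1 ∈ Finset.range (l+2),
              (if r1 = 0 then (q*(p+1)-1) * (q^(l+1) * Bb (p+1) (-1) (l+1)) else 0)
              = (q*(p+1)-1) * (q^(l+1) * Bb (p+1) (-1) (l+1)) := by
            rw [Finset.sum_ite_eq' (Finset.range (l+2)) 0
              (fun _ => (q*(p+1)-1) * (q^(l+1) * Bb (p+1) (-1) (l+1)))]
            simp
          have p3 : ∑ r1 ∈ Finset.range (l+2),
              (if r1 = l+1 then (q*(p+1)-1) * (q^(l+1) * Bb (p+1) (-1) (l+1)) else 0)
              = (q*(p+1)-1) * (q^(l+1) * Bb (p+1) (-1) (l+1)) := by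
            rw [Finset.sum_ite_eq' (Finset.range (l+2)) (l+1)
              (fun _ => (q*(p+1)-1) * (q^(l+1) * Bb (p+1) (-1) (l+1)))]
            simp
          rw [p1, p2, p3]
          ring
        -- full double sum
        have hsum1 : ∀ r0 ∈ Finset.range (n+1),
            ∑ r1 ∈ Finset.range (n+2-r0),
              (Nat.factorial (n+1) : ℝ) /
                  ((Nat.factorial r0 : ℝ) * (Nat.factorial r1 : ℝ) *
                    (Nat.factorial (n+1-r0-r1) : ℝ))
                * α (r0+1) * β r1 * β (n+1-r0-r1)
            = C * ((q^r0 * Bb (p+1) (p+1-2) r0) * (q^(n+1-r0) * (Uu (p+1) (-2) (n+1-r0)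
                  + 2*(q*(p+1) - 1) * Bb (p+1) (-1) (n+1-r0)))) := by
          intro r0 hr0
          have h0 : r0 ≤ n := by
            have := Finset.mem_range.mp hr0; omega
          rw [show n+2-r0 = (n+1-r0)+1 by omega]
          have congr1 : ∀ r1 ∈ Finset.range ((n+1-r0)+1),
              (Nat.factorial (n+1) : ℝ) /
                  ((Nat.factorial r0 : ℝ) * (Nat.factorial r1 : ℝ) *
                    (Nat.factorial (n+1-r0-r1) : ℝ))
                * α (r0+1) * β r1 * β (n+1-r0-r1)
              = C * ((q^r0 * Bb (p+1) (p+1-2) r0) * (Z r1 * Z (n+1-r0-r1))) := by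
            intro r1 hr1
            have h1 : r1 ≤ n+1-r0 := by
              have := Finset.mem_range.mp hr1; omega
            exact hterm r0 r1 h0 h1
          rw [Finset.sum_congr rfl congr1, ← Finset.mul_sum, ← Finset.mul_sum,
            hinner (n+1-r0) (by omega)]
        have hsum2 :
            (∑ r0 ∈ Finset.range (n+1), ∑ r1 ∈ Finset.range (n+2-r0),
              (Nat.factorial (n+1) : ℝ) /
                  ((Nat.factorial r0 : ℝ) * (Nat.factorial r1 : ℝ) *
                    (Nat.factorial (n+1-r0-r1) : ℝ))
                * α (r0+1) * β r1 * β (n+1-r0-r1))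
            = C * (q^(n+1) *
                ((Vv (p+1) (p+1-4) (n+1) - Bb (p+1) (p+1-2) (n+1))
                  + 2*(q*(p+1) - 1) * (Uu (p+1) (p+1-3) (n+1) - Bb (p+1) (p+1-2) (n+1)))) := by
          rw [Finset.sum_congr rfl hsum1]
          have recomb : ∀ r0 ∈ Finset.range (n+1),
              C * ((q^r0 * Bb (p+1) (p+1-2) r0) * (q^(n+1-r0) * (Uu (p+1) (-2) (n+1-r0)
                  + 2*(q*(p+1) - 1) * Bb (p+1) (-1) (n+1-r0))))
              = C * q^(n+1) * (Bb (p+1) (p+1-2) r0 * Uu (p+1) (-2) (n+1-r0))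
                + C * q^(n+1) * (2*(q*(p+1) - 1))
                    * (Bb (p+1) (p+1-2) r0 * Bb (p+1) (-1) (n+1-r0)) := by
            intro r0 hr0
            have hr0' : r0 ≤ n := by
              have := Finset.mem_range.mp hr0; omega
            have hpow : q^r0 * q^(n+1-r0) = q^(n+1) := by
              rw [← pow_add]
              congr 1
              omega
            calc C * ((q^r0 * Bb (p+1) (p+1-2) r0) * (q^(n+1-r0) * (Uu (p+1) (-2) (n+1-r0)
                  + 2*(q*(p+1) - 1) * Bb (p+1) (-1) (n+1-r0))))
                = (q^r0 * q^(n+1-r0)) * (C * (Bb (p+1) (p+1-2) r0 * Uu (p+1) (-2) (n+1-r0))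
                    + C * (2*(q*(p+1) - 1)) * (Bb (p+1) (p+1-2) r0 * Bb (p+1) (-1) (n+1-r0))) := by
                  ring
              _ = _ := by rw [hpow]; ring
          rw [Finset.sum_congr rfl recomb, Finset.sum_add_distrib]
          have piece1 : ∑ r0 ∈ Finset.range (n+1),
              C * q^(n+1) * (Bb (p+1) (p+1-2) r0 * Uu (p+1) (-2) (n+1-r0))
              = C * q^(n+1) * (Vv (p+1) (p+1-4) (n+1) - Bb (p+1) (p+1-2) (n+1)) := by
            rw [← Finset.mul_sum]
            have hh := Finset.sum_range_succ
              (fun r0 => Bb (p+1) (p+1-2) r0 * Uu (p+1) (-2) (n+1-r0)) (n+1)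
            rw [conv_BU (p+1) (n+1) (p+1-2) (-2), Nat.sub_self, Uu_zero,
              show (p+1-2) + (-2:ℝ) = p+1-4 by ring] at hh
            have : ∑ r0 ∈ Finset.range (n+1), Bb (p+1) (p+1-2) r0 * Uu (p+1) (-2) (n+1-r0)
                = Vv (p+1) (p+1-4) (n+1) - Bb (p+1) (p+1-2) (n+1) := by
              simp only [mul_one] at hh
              linarith [hh]
            rw [this]
          have piece2 : ∑ r0 ∈ Finset.range (n+1),
              C * q^(n+1) * (2*(q*(p+1) - 1)) * (Bb (p+1) (p+1-2) r0 * Bb (p+1) (-1) (n+1-r0))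
              = C * q^(n+1) * (2*(q*(p+1) - 1))
                  * (Uu (p+1) (p+1-3) (n+1) - Bb (p+1) (p+1-2) (n+1)) := by
            rw [← Finset.mul_sum]
            have hh := Finset.sum_range_succ
              (fun r0 => Bb (p+1) (p+1-2) r0 * Bb (p+1) (-1) (n+1-r0)) (n+1)
            rw [conv_BB (p+1) (n+1) (p+1-2) (-1), Nat.sub_self, Bb_zero,
              show (p+1-2) + (-1:ℝ) = p+1-3 by ring] at hh
            have : ∑ r0 ∈ Finset.range (n+1), Bb (p+1) (p+1-2) r0 * Bb (p+1) (-1) (n+1-r0)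
                = Uu (p+1) (p+1-3) (n+1) - Bb (p+1) (p+1-2) (n+1) := by
              simp only [mul_one] at hh
              linarith [hh]
            rw [this]
          rw [piece1, piece2]
          ring
        -- the key combinatorial identity and final assembly
        have hkey := key_ident (p+1) n
        have hfacn : (Nat.factorial (n+1) : ℝ) ≠ 0 := by positivity
        rw [hrec (n+2) (by omega)]
        rw [show n + 2 - 1 = n + 1 from rfl]
        rw [hsum2, hC]
        rw [show ((n+2:ℕ):ℝ) - 1 = (n:ℝ)+1 by push_cast; ring]
        have hbr2 : (Vv (p+1) (p+1-4) (n+1) - Bb (p+1) (p+1-2) (n+1))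
            + 2*(q*(p+1) - 1) * (Uu (p+1) (p+1-3) (n+1) - Bb (p+1) (p+1-2) (n+1))
            = p*((n:ℝ)+1)*Bb (p+1) (p+1-2) (n+1) / (p+1) := by
          rw [eq_div_iff ht]
          linear_combination hkey
            + (2*(Uu (p+1) (p+1-3) (n+1) - Bb (p+1) (p+1-2) (n+1))) * hqt
        rw [hbr2, hq]
        field_simp
end

section
/- Define η_1 = p(1−p) and η_m = Σ_{ℓ=1}^{m−1} C(m,ℓ) η_ℓ η_{m−ℓ} for m ≥ 2, where 0 < p < 1. Then η_m = (m−1)! C(2m−2, m−1) (p(1−p))^m for all m ≥ 1. -/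
open Real Filter Topology Set

lemma catalan_succ_range (n : ℕ) :
    catalan (n + 1) = ∑ i ∈ Finset.range (n + 1), catalan i * catalan (n - i) := by
  rw [catalan_succ, Fin.sum_univ_eq_sum_range (fun i => catalan i * catalan (n - i))]

/-- The numbers `η_m` defined by `η_1 = p(1−p)` and the binomial convolution recurrence
equal `(m−1)! C(2m−2, m−1) (p(1−p))^m`. -/
theorem stmt15 (p : ℝ) (hp0 : 0 < p) (hp1 : p < 1) (η : ℕ → ℝ)
    (h1 : η 1 = p * (1 - p))
    (hrec : ∀ m : ℕ, 2 ≤ m →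
      η m = ∑ l ∈ Finset.Ico 1 m, (Nat.choose m l : ℝ) * η l * η (m - l)) :
    ∀ m : ℕ, 1 ≤ m →
      η m = (Nat.factorial (m - 1) : ℝ) * (Nat.choose (2 * m - 2) (m - 1) : ℝ) *
        (p * (1 - p)) ^ m := by
  set x := p * (1 - p) with hx
  have key : ∀ m : ℕ, 1 ≤ m →
      η m = (Nat.factorial m : ℝ) * (catalan (m - 1) : ℝ) * x ^ m := by
    intro m
    induction m using Nat.strong_induction_on with
    | _ m ih =>
      intro hm
      rcases eq_or_lt_of_le hm with h | hm2
      · rw [← h]; simp [h1, Nat.factorial]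
      · rw [hrec m hm2]
        have hsum : ∀ l ∈ Finset.Ico 1 m,
            (Nat.choose m l : ℝ) * η l * η (m - l) =
            (Nat.factorial m : ℝ) * x ^ m *
              ((catalan (l - 1) : ℝ) * (catalan (m - l - 1) : ℝ)) := by
          intro l hl
          rw [Finset.mem_Ico] at hl
          obtain ⟨hl1, hlm⟩ := hl
          have hml1 : 1 ≤ m - l := Nat.le_sub_of_add_le (by omega)
          have hmlm : m - l < m := by omega
          rw [ih l hlm hl1, ih (m - l) hmlm hml1]
          have hfac : (Nat.choose m l : ℝ) * (Nat.factorial l : ℝ) *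
              (Nat.factorial (m - l) : ℝ) = (Nat.factorial m : ℝ) := by
            rw [← Nat.cast_mul, ← Nat.cast_mul,
              Nat.choose_mul_factorial_mul_factorial (le_of_lt hlm)]
          have hpow : x ^ l * x ^ (m - l) = x ^ m := by
            rw [← pow_add]; congr 1; omega
          calc (Nat.choose m l : ℝ) * ((Nat.factorial l : ℝ) * (catalan (l - 1) : ℝ) * x ^ l) *
                ((Nat.factorial (m - l) : ℝ) * (catalan (m - l - 1) : ℝ) * x ^ (m - l))
              = ((Nat.choose m l : ℝ) * (Nat.factorial l : ℝ) * (Nat.factorial (m - l) : ℝ)) *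
                (x ^ l * x ^ (m - l)) * ((catalan (l - 1) : ℝ) * (catalan (m - l - 1) : ℝ)) := by
                ring
            _ = (Nat.factorial m : ℝ) * x ^ m *
                ((catalan (l - 1) : ℝ) * (catalan (m - l - 1) : ℝ)) := by rw [hfac, hpow]
        rw [Finset.sum_congr rfl hsum, ← Finset.mul_sum]
        have hcats : (∑ l ∈ Finset.Ico 1 m,
            (catalan (l - 1) : ℝ) * (catalan (m - l - 1) : ℝ)) = (catalan (m - 1) : ℝ) := by
          obtain ⟨n, rfl⟩ : ∃ n, m = n + 2 := ⟨m - 2, by omega⟩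
          have hnat : (∑ l ∈ Finset.Ico 1 (n + 2),
              catalan (l - 1) * catalan (n + 2 - l - 1)) = catalan (n + 2 - 1) := by
            rw [show n + 2 - 1 = n + 1 from rfl, catalan_succ_range n,
              Finset.sum_Ico_eq_sum_range]
            apply Finset.sum_congr (by norm_num)
            intro i hi
            congr 2 <;> omega
          have hcast := congrArg (Nat.cast : ℕ → ℝ) hnat
          push_cast at hcast
          rw [hcast]
          norm_num
        rw [hcats]
        ring
  intro m hm
  rw [key m hm]
  congr 1
  rw [← Nat.cast_mul, ← Nat.cast_mul]
  congr 1
  obtain ⟨n, rfl⟩ : ∃ n, m = n + 1 := ⟨m - 1, by omega⟩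
  have h2 : 2 * (n + 1) - 2 = 2 * n := by omega
  have hcb : (2 * n).choose n = Nat.centralBinom n := rfl
  rw [Nat.add_sub_cancel, h2, hcb, ← succ_mul_catalan_eq_centralBinom,
    Nat.factorial_succ]
  ring
end

section
/- For 0 < p < 1 with p ≠ 1/2, the unique solution of the ODE M'(z) = (2p/(1−z)) M(z) + p(1−p)/(1−z)² with M(0) = p, on a neighborhood of 0 in (−1,1), is M(z) = ((p(1−p))/(1−2p)) (1−z)^{−1} − (p²/(1−2p)) (1−z)^{−2p}; consequently, for p ≠ 1/2, the expected source degree in the saturation model is E(D_n) = (1/(1−2p))(1 − C(n+2p−1, n)), and for p = 1/2 it equals the harmonic number H_n. -/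
open Real Filter Topology Set

section Aux

open FormalMultilinearSeries

lemma coeff_eq_zero' {a : ℕ → ℝ} {r : ℝ} (hr : 0 < r)
    (h : ∀ z : ℝ, z ≠ 0 → |z| < r → HasSum (fun n => a n * z ^ n) 0) :
    ∀ n, a n = 0 := by
  set g : ℝ → ℝ := fun z => ∑' n, a n * z ^ n with hgdef
  have hgz : ∀ z : ℝ, z ≠ 0 → |z| < r → g z = 0 := fun z hz hz' => (h z hz hz').tsum_eq
  have hg0 : HasSum (fun n => a n * (0:ℝ) ^ n) (a 0) := by
    convert hasSum_single (f := fun n => a n * (0:ℝ)^n) 0 (fun b hb => by simp [zero_pow hb])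
      using 1
    simp
  have hr2 : (0:ℝ) < r / 2 := by positivity
  set r2 : NNReal := ⟨r/2, hr2.le⟩ with hr2def
  have hsummable : Summable fun n => ‖ofScalars ℝ a n‖ * (r2 : ℝ) ^ n := by
    have h2 := (h (r/2) (by positivity) (by rw [abs_of_pos hr2]; linarith)).summable.abs
    refine h2.congr fun n => ?_
    rw [ofScalars_norm, abs_mul, abs_pow, abs_of_pos hr2]
    rfl
  have hball : HasFPowerSeriesOnBall g (ofScalars ℝ a) 0 r2 := by
    refine ⟨(ofScalars ℝ a).le_radius_of_summable_norm hsummable, by exact_mod_cast hr2, ?_⟩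
    intro y hy
    have hy' : |y| < r / 2 := by
      rw [EMetric.mem_ball, edist_zero_right] at hy
      have h' : ‖y‖₊ < r2 := ENNReal.coe_lt_coe.mp hy
      have h'' : ‖y‖ < r / 2 := NNReal.coe_lt_coe.mpr h'
      simpa [Real.norm_eq_abs] using h''
    simp_rw [ofScalars_apply_eq, smul_eq_mul, zero_add]
    by_cases hy0 : y = 0
    · subst hy0
      have : g 0 = a 0 := hg0.tsum_eq
      rw [this]; exact hg0
    · have hs := h y hy0 (by linarith)
      rw [hgdef]
      simpa [hs.tsum_eq] using hs
  have hca : ContinuousAt g 0 :=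
    (hball.continuousOn).continuousAt (EMetric.isOpen_ball.mem_nhds (by
      simp [EMetric.mem_ball, ENNReal.coe_pos]; exact_mod_cast hr2))
  have hev : g =ᶠ[𝓝[≠] (0:ℝ)] (fun _ => (0:ℝ)) := by
    filter_upwards [eventually_nhdsWithin_of_eventually_nhds (eventually_abs_sub_lt 0 hr),
      self_mem_nhdsWithin] with z hz1 hz2
    exact hgz z hz2 (by simpa using hz1)
  have hg00 : g 0 = 0 := by
    have h1 : Tendsto g (𝓝[≠] (0:ℝ)) (𝓝 (g 0)) := hca.continuousWithinAt.tendsto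
    have h2 : Tendsto g (𝓝[≠] (0:ℝ)) (𝓝 0) := tendsto_const_nhds.congr' hev.symm
    exact tendsto_nhds_unique h1 h2
  have hevn : g =ᶠ[𝓝 (0:ℝ)] 0 := by
    filter_upwards [eventually_abs_sub_lt 0 hr] with z hz
    by_cases hz0 : z = 0
    · simpa [hz0] using hg00
    · exact hgz z hz0 (by simpa using hz)
  have := hball.hasFPowerSeriesAt.eq_zero_of_eventually hevn
  have ha : a = 0 := (ofScalars_series_eq_zero ℝ).mp this
  exact fun n => congrFun ha n

lemma hasSum_shift' {c : ℕ → ℝ} {z t : ℝ} (h : HasSum (fun n => c n * z ^ n) t) :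
    HasSum (fun n => (if n = 0 then 0 else c (n - 1)) * z ^ n) (z * t) := by
  have h2 : HasSum (fun n : ℕ =>
      (if n + 1 = 0 then (0:ℝ) else c (n + 1 - 1)) * z ^ (n + 1)) (z * t) := by
    simpa [pow_succ, mul_comm, mul_assoc, mul_left_comm] using h.mul_left z
  have := (hasSum_nat_add_iff (f := fun n => (if n = 0 then (0:ℝ) else c (n - 1)) * z ^ n) 1).mp h2
  simpa using this

lemma deriv_and_summable' {e : ℕ → ℝ} {ρ : ℝ} (hρ : 0 < ρ)
    (hsum : Summable fun n => |e n| * ρ ^ n) :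
    ∀ z : ℝ, |z| < ρ / 2 →
      (Summable fun n => e n * ((n : ℝ) * z ^ (n - 1))) ∧
      HasDerivAt (fun y => ∑' n, e n * y ^ n)
        (∑' n, e n * ((n : ℝ) * z ^ (n - 1))) z := by
  have hC : ∀ n, |e n| * ρ ^ n ≤ ∑' n, |e n| * ρ ^ n := fun n =>
    hsum.le_tsum n (fun i _ => by positivity)
  set C := ∑' n, |e n| * ρ ^ n with hCdef
  set u : ℕ → ℝ := fun n => C / ρ * ((n : ℝ) * (1 / 2) ^ (n - 1)) with hudef
  have hu : Summable u := by
    apply Summable.mul_left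
    have h2 : Summable fun n : ℕ => (n : ℝ) * (1 / 2 : ℝ) ^ n := by
      simpa using summable_pow_mul_geometric_of_norm_lt_one (R := ℝ) 1
        (r := (1/2 : ℝ)) (by norm_num)
    have h3 := h2.mul_left 2
    apply h3.of_nonneg_of_le (fun n => by positivity)
    intro n
    cases n with
    | zero => simp
    | succ m =>
      simp only [Nat.add_sub_cancel]
      rw [pow_succ]
      push_cast
      ring_nf
      exact le_refl _
  have hbound : ∀ (n : ℕ) (y : ℝ), y ∈ Metric.ball (0:ℝ) (ρ/2) →
      ‖e n * ((n : ℝ) * y ^ (n - 1))‖ ≤ u n := by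
    intro n y hy
    rw [Metric.mem_ball, dist_zero_right, Real.norm_eq_abs] at hy
    have h1 : |e n| ≤ C / ρ ^ n := by
      rw [le_div_iff₀ (by positivity)]
      exact hC n
    have hCnn : 0 ≤ C := tsum_nonneg (fun n => by positivity)
    calc ‖e n * ((n : ℝ) * y ^ (n - 1))‖ = |e n| * ((n:ℝ) * |y| ^ (n-1)) := by
          rw [Real.norm_eq_abs, abs_mul, abs_mul, abs_pow, Nat.abs_cast]
      _ ≤ (C / ρ ^ n) * ((n:ℝ) * (ρ/2) ^ (n-1)) := by
          apply mul_le_mul h1 _ (by positivity) (by positivity)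
          exact mul_le_mul_of_nonneg_left (pow_le_pow_left₀ (abs_nonneg y) hy.le _)
            (Nat.cast_nonneg n)
      _ ≤ u n := by
          cases n with
          | zero => simp [hudef]
          | succ m =>
            simp only [hudef, Nat.add_sub_cancel]
            apply le_of_eq
            rw [div_pow]
            field_simp
            ring_nf
            rw [mul_assoc (C * ρ * ρ ^ m), ← mul_pow]
            norm_num
  intro z hz
  have hz' : z ∈ Metric.ball (0:ℝ) (ρ/2) := by
    rw [Metric.mem_ball, dist_zero_right, Real.norm_eq_abs]; exact hz
  have hderiv : ∀ (n : ℕ) (y : ℝ), y ∈ Metric.ball (0:ℝ) (ρ/2) →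
      HasDerivAt (fun x : ℝ => e n * x ^ n) (e n * ((n:ℝ) * y ^ (n-1))) y :=
    fun n y _ => (hasDerivAt_pow n y).const_mul (e n)
  have hsum0 : Summable fun n => e n * (0:ℝ) ^ n := by
    apply summable_of_ne_finset_zero (s := {0})
    intro n hn
    simp at hn
    simp [zero_pow hn]
  constructor
  · exact Summable.of_norm_bounded hu (fun n => hbound n z hz')
  · exact hasDerivAt_tsum_of_isPreconnected hu Metric.isOpen_ball
      (convex_ball (0:ℝ) (ρ/2)).isPreconnected hderiv hbound
      (Metric.mem_ball_self (by positivity)) hsum0 hz'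

lemma hasDerivAt_one_sub (z : ℝ) : HasDerivAt (fun z : ℝ => 1 - z) (-1) z := by
  exact (hasDerivAt_id' z).const_sub 1

lemma hasDerivAt_explicit {p z : ℝ} (hp : 1 - 2*p ≠ 0) (hz1 : -1 < z) (hz2 : z < 1) :
    HasDerivAt
      (fun z : ℝ =>
        p * (1 - p) / (1 - 2 * p) * (1 - z)⁻¹ - p ^ 2 / (1 - 2 * p) * (1 - z) ^ (-(2 * p)))
      (2 * p / (1 - z) *
          (p * (1 - p) / (1 - 2 * p) * (1 - z)⁻¹ -
            p ^ 2 / (1 - 2 * p) * (1 - z) ^ (-(2 * p))) +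
        p * (1 - p) / (1 - z) ^ 2) z := by
  have h1z : (0:ℝ) < 1 - z := by linarith
  have h1 : HasDerivAt (fun z : ℝ => (1-z)⁻¹) (-(-1)/(1-z)^2) z :=
    (hasDerivAt_one_sub z).inv h1z.ne'
  have h2 : HasDerivAt (fun z : ℝ => (1-z) ^ (-(2*p)))
      ((-1) * (-(2*p)) * (1-z) ^ (-(2*p) - 1)) z :=
    (hasDerivAt_one_sub z).rpow_const (Or.inl h1z.ne')
  have h3 := (h1.const_mul (p * (1 - p) / (1 - 2 * p))).sub
    (h2.const_mul (p ^ 2 / (1 - 2 * p)))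
  refine h3.congr_deriv ?_
  have hw : (1-z) ^ (-(2*p) - 1) = (1-z) ^ (-(2*p)) / (1-z) := by
    rw [Real.rpow_sub h1z, Real.rpow_one]
  rw [hw]
  set w := (1-z) ^ (-(2*p)) with hwdef
  field_simp
  linear_combination (p - p ^ 2) * (inv_mul_cancel₀ hp)

lemma eq_on_of_deriv_zero {G : ℝ → ℝ} {δ : ℝ} (hδ0 : 0 < δ)
    (hG : ∀ z ∈ Ioo (-δ) δ, HasDerivAt G 0 z) :
    ∀ z ∈ Ioo (-δ) δ, G z = G 0 := by
  intro z hz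
  obtain ⟨hz1, hz2⟩ := hz
  rcases le_or_gt 0 z with h | h
  · have hsub : Icc (0:ℝ) z ⊆ Ioo (-δ) δ := fun x hx => ⟨by linarith [hx.1], by
      have := hx.2; linarith⟩
    have hc : ContinuousOn G (Icc 0 z) := fun x hx =>
      ((hG x (hsub hx)).continuousAt).continuousWithinAt
    have := constant_of_has_deriv_right_zero hc (fun x hx =>
      (hG x (hsub (Ico_subset_Icc_self hx))).hasDerivWithinAt)
    exact this z (right_mem_Icc.2 h)
  · have hsub : Icc z (0:ℝ) ⊆ Ioo (-δ) δ := fun x hx => ⟨by linarith [hx.1], by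
      have := hx.2; linarith⟩
    have hc : ContinuousOn G (Icc z 0) := fun x hx =>
      ((hG x (hsub hx)).continuousAt).continuousWithinAt
    have := constant_of_has_deriv_right_zero hc (fun x hx =>
      (hG x (hsub (Ico_subset_Icc_self hx))).hasDerivWithinAt)
    exact (this 0 (right_mem_Icc.2 h.le)).symm

lemma gchoose_eq (p : ℝ) (n : ℕ) :
    gchoose ((n:ℝ) + 2*p - 1) n = (∏ i ∈ Finset.range n, (2*p + i)) / (Nat.factorial n) := by
  unfold gchoose
  congr 1
  rw [← Finset.prod_range_reflect (fun j => 2*p + (j:ℝ)) n]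
  apply Finset.prod_congr rfl
  intro j hj
  rw [Finset.mem_range] at hj
  have h1 : ((n - 1 - j : ℕ) : ℝ) = (n:ℝ) - 1 - j := by
    have : n - 1 - j = n - (1 + j) := by omega
    rw [this, Nat.cast_sub (by omega)]
    push_cast
    ring
  rw [h1]
  ring

end Aux

/-- For `p ≠ 1/2`, the unique solution of `M' = (2p/(1−z))M + p(1−p)/(1−z)²`, `M(0)=p`,
is `M(z) = p(1−p)/(1−2p)·(1−z)^{-1} − p²/(1−2p)·(1−z)^{−2p}`; consequently, via
`M(z) = p/(1−z) + p² Σ_{n≥1} E(D_n) z^n`, the expected source degree in the saturation model is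
`E(D_n) = (1/(1−2p))(1 − C(n+2p−1,n))` for `p ≠ 1/2` and `H_n` for `p = 1/2`. -/
theorem stmt17 (p : ℝ) (hp0 : 0 < p) (hp1 : p < 1)
    (M : ℝ → ℝ) (d : ℕ → ℝ) (δ : ℝ) (hδ0 : 0 < δ) (hδ1 : δ ≤ 1)
    (hODE : ∀ z ∈ Ioo (-δ) δ,
      HasDerivAt M (2 * p / (1 - z) * M z + p * (1 - p) / (1 - z) ^ 2) z)
    (hM0 : M 0 = p)
    (hser : ∀ z ∈ Ioo (-δ) δ,
      M z = p / (1 - z) + p ^ 2 * ∑' n : ℕ, d (n + 1) * z ^ (n + 1)) :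
    (p ≠ 1 / 2 →
      (∀ z ∈ Ioo (-(1 : ℝ)) 1,
        HasDerivAt
          (fun z : ℝ =>
            p * (1 - p) / (1 - 2 * p) * (1 - z)⁻¹ - p ^ 2 / (1 - 2 * p) * (1 - z) ^ (-(2 * p)))
          (2 * p / (1 - z) *
              (p * (1 - p) / (1 - 2 * p) * (1 - z)⁻¹ -
                p ^ 2 / (1 - 2 * p) * (1 - z) ^ (-(2 * p))) +
            p * (1 - p) / (1 - z) ^ 2) z) ∧
      (∀ z ∈ Ioo (-δ) δ,
        M z = p * (1 - p) / (1 - 2 * p) * (1 - z)⁻¹ -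
          p ^ 2 / (1 - 2 * p) * (1 - z) ^ (-(2 * p))) ∧
      (∀ n : ℕ, 1 ≤ n →
        d n = (1 / (1 - 2 * p)) * (1 - gchoose ((n : ℝ) + 2 * p - 1) n))) ∧
    (p = 1 / 2 → ∀ n : ℕ, 1 ≤ n → d n = ∑ k ∈ Finset.Icc 1 n, (1 : ℝ) / k) := by
  have h0mem : (0:ℝ) ∈ Ioo (-δ) δ := ⟨by linarith, hδ0⟩
  have hδIoo : ∀ z ∈ Ioo (-δ) δ, (0:ℝ) < 1 - z := fun z hz => by
    have := hz.2; linarith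
  have hp2 : (0:ℝ) < p ^ 2 := by positivity
  set f : ℝ → ℝ := fun z => M z - p / (1 - z) with hfdef
  have hf0 : f 0 = 0 := by simp [hfdef, hM0]
  set A : ℝ → ℝ := fun z => 2*p/(1-z) * f z + p^2/(1-z)^2 with hAdef
  have hfd : ∀ z ∈ Ioo (-δ) δ, HasDerivAt f (A z) z := by
    intro z hz
    have h1z := hδIoo z hz
    have hq : HasDerivAt (fun z : ℝ => p / (1-z)) (p * (-(-1)/(1-z)^2)) z := by
      have := ((hasDerivAt_one_sub z).inv h1z.ne').const_mul p
      simpa [div_eq_mul_inv] using this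
    have := (hODE z hz).sub hq
    refine this.congr_deriv ?_
    rw [hAdef, hfdef]
    field_simp
    ring
  -- nonvanishing of f near 0
  obtain ⟨ρ₀, hρ₀pos, hρ₀δ, hfne⟩ :
      ∃ ρ₀ : ℝ, 0 < ρ₀ ∧ ρ₀ ≤ δ ∧ ∀ z : ℝ, z ≠ 0 → |z| < ρ₀ → f z ≠ 0 := by
    have hfc : ContinuousAt f 0 := (hfd 0 h0mem).continuousAt
    have hA1 : ContinuousAt (fun z : ℝ => 1 - z) 0 := by fun_prop
    have hAc : ContinuousAt A 0 := by
      apply ContinuousAt.add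
      · exact (continuousAt_const.div hA1 (by norm_num)).mul hfc
      · exact continuousAt_const.div (hA1.pow 2) (by norm_num)
    have hA0 : A 0 = p ^ 2 := by simp [hAdef, hf0]
    have hpred : ∀ᶠ y in 𝓝 (A 0), 0 < y := by
      rw [hA0]; exact eventually_gt_nhds hp2
    have hev : ∀ᶠ z in 𝓝 (0:ℝ), 0 < A z := hAc.eventually hpred
    have hev2 : ∀ᶠ z in 𝓝 (0:ℝ), 0 < A z ∧ z ∈ Ioo (-δ) δ :=
      hev.and (isOpen_Ioo.mem_nhds h0mem)
    obtain ⟨ε, hε, hball⟩ := Metric.eventually_nhds_iff.mp hev2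
    refine ⟨min ε δ, lt_min hε hδ0, min_le_right _ _, ?_⟩
    have hmono : StrictMonoOn f (Ioo (-(min ε δ)) (min ε δ)) := by
      apply strictMonoOn_of_deriv_pos (convex_Ioo _ _)
      · intro x hx
        have hx' : x ∈ Ioo (-δ) δ := by
          constructor
          · have := hx.1; have := min_le_right ε δ; linarith
          · have := hx.2; have := min_le_right ε δ; linarith
        exact (hfd x hx').continuousAt.continuousWithinAt
      · intro x hx
        rw [interior_Ioo] at hx
        have hxε : dist x 0 < ε := by
          rw [Real.dist_eq, sub_zero]
          rw [abs_lt]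
          constructor
          · have := hx.1; have := min_le_left ε δ; linarith
          · have := hx.2; have := min_le_left ε δ; linarith
        have hx' : x ∈ Ioo (-δ) δ := (hball hxε).2
        rw [(hfd x hx').deriv]
        exact (hball hxε).1
    intro z hz hz'
    rw [abs_lt] at hz'
    have hzm : z ∈ Ioo (-(min ε δ)) (min ε δ) := ⟨hz'.1, hz'.2⟩
    have h0m : (0:ℝ) ∈ Ioo (-(min ε δ)) (min ε δ) := by
      constructor <;> simp [lt_min hε hδ0] <;> positivity
    rcases lt_or_gt_of_ne hz with h | h
    · have := hmono hzm h0m h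
      rw [hf0] at this
      exact ne_of_lt this
    · have := hmono h0m hzm h
      rw [hf0] at this
      exact (ne_of_lt this).symm
  -- HasSum representation of f
  set e : ℕ → ℝ := fun n => if n = 0 then 0 else p ^ 2 * d n with hedef
  have hesum : ∀ z : ℝ, z ≠ 0 → |z| < ρ₀ → HasSum (fun n => e n * z ^ n) (f z) := by
    intro z hz0 hzρ
    have hzδ : z ∈ Ioo (-δ) δ := by
      rw [abs_lt] at hzρ
      exact ⟨by linarith [hzρ.1], by linarith [hzρ.2]⟩
    have hfz : f z = p ^ 2 * ∑' n : ℕ, d (n + 1) * z ^ (n + 1) := by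
      rw [hfdef]
      have := hser z hzδ
      linarith
    have hfz0 : f z ≠ 0 := hfne z hz0 hzρ
    have hT0 : (∑' n : ℕ, d (n + 1) * z ^ (n + 1)) ≠ 0 := by
      intro h
      rw [h, mul_zero] at hfz
      exact hfz0 hfz
    have hsummable : Summable fun n : ℕ => d (n + 1) * z ^ (n + 1) := by
      by_contra hS
      exact hT0 (tsum_eq_zero_of_not_summable hS)
    have hT : HasSum (fun n : ℕ => d (n + 1) * z ^ (n + 1)) (f z / p ^ 2) := by
      have := hsummable.hasSum
      rw [hfz]
      convert this using 1
      field_simp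
    have hT2 : HasSum (fun n : ℕ => e (n + 1) * z ^ (n + 1)) (f z) := by
      have h2 := hT.mul_left (p ^ 2)
      have hval : p ^ 2 * (f z / p ^ 2) = f z := by field_simp
      rw [hval] at h2
      refine h2.congr_fun fun n => ?_
      simp [hedef]
      ring
    have h3 := (hasSum_nat_add_iff (f := fun n => e n * z ^ n) 1).mp
      (by simpa using hT2)
    simpa [hedef] using h3
  -- the recurrence
  have hrec : ∀ n : ℕ, ((n:ℝ) + 1) * e (n + 1) = ((n:ℝ) + 2*p) * e n + p ^ 2 := by
    have hρ2 : (0:ℝ) < ρ₀ / 2 := by positivity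
    have hz₁sum : Summable fun n => |e n| * (ρ₀ / 2) ^ n := by
      have h := (hesum (ρ₀/2) hρ2.ne' (by rw [abs_of_pos hρ2]; linarith)).summable.abs
      refine h.congr fun n => ?_
      rw [abs_mul, abs_pow, abs_of_pos hρ2]
    have hder := deriv_and_summable' hρ2 hz₁sum
    set g : ℝ → ℝ := fun y => ∑' n, e n * y ^ n with hgdef
    have hgf : ∀ z : ℝ, |z| < ρ₀ / 2 / 2 → g z = f z := by
      intro z hz
      by_cases h0 : z = 0
      · subst h0
        have hs0 : HasSum (fun n => e n * (0:ℝ) ^ n) (e 0) := by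
          convert hasSum_single (f := fun n => e n * (0:ℝ) ^ n) 0
            (fun b hb => by simp [zero_pow hb]) using 1
          simp
        rw [hgdef]
        simp only []
        rw [hs0.tsum_eq, hf0]
        simp [hedef]
      · exact (hesum z h0 (by linarith)).tsum_eq
    have key : ∀ z : ℝ, z ≠ 0 → |z| < ρ₀ / 2 / 2 →
        HasSum (fun n : ℕ => (((n:ℝ)+1) * e (n+1) - (n:ℝ) * e n - 2*p * e n - p^2) * z^n) 0 := by
      intro z hz0 hz
      obtain ⟨hsumD, hderiv⟩ := hder z hz
      have hzρ : |z| < ρ₀ := by linarith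
      have hzδ : z ∈ Ioo (-δ) δ := by
        rw [abs_lt] at hzρ
        exact ⟨by linarith [hzρ.1], by linarith [hzρ.2]⟩
      have habs1 : |z| < 1 := by linarith
      have hev : f =ᶠ[𝓝 z] g := by
        have hball : Metric.ball (0:ℝ) (ρ₀/2/2) ∈ 𝓝 z :=
          Metric.isOpen_ball.mem_nhds (by
            rw [Metric.mem_ball, Real.dist_eq, sub_zero]; exact hz)
        filter_upwards [hball] with y hy
        exact (hgf y (by rwa [Metric.mem_ball, Real.dist_eq, sub_zero] at hy)).symm
      have hderivf : HasDerivAt f (∑' n, e n * ((n:ℝ) * z^(n-1))) z :=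
        hderiv.congr_of_eventuallyEq hev
      have hDA : (∑' n, e n * ((n:ℝ) * z^(n-1))) = A z := hderivf.unique (hfd z hzδ)
      have hD : HasSum (fun n : ℕ => e n * ((n:ℝ) * z^(n-1))) (A z) := hDA ▸ hsumD.hasSum
      have hE : HasSum (fun n : ℕ => (((n:ℝ)+1) * e (n+1)) * z^n) (A z) := by
        have h4 := (hasSum_nat_add_iff (f := fun n => e n * ((n:ℝ) * z^(n-1))) 1).mpr
          (by simpa using hD)
        refine h4.congr_fun fun n => ?_
        push_cast
        ring
      have hE2 : HasSum (fun n : ℕ => ((n:ℝ) * e n) * z^n) (z * A z) := by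
        have h5 := hasSum_shift' (c := fun n => ((n:ℝ)+1) * e (n+1)) hE
        refine h5.congr_fun fun n => ?_
        cases n with
        | zero => simp
        | succ m =>
          simp only [Nat.succ_ne_zero, if_false, Nat.add_sub_cancel]
          push_cast
          ring
      have hgeo : HasSum (fun n : ℕ => z^n) ((1-z)⁻¹) := hasSum_geometric_of_abs_lt_one habs1
      have h1 := hesum z hz0 hzρ
      have hcomb := ((hE.sub hE2).sub (h1.mul_left (2*p))).sub (hgeo.mul_left (p^2))
      have hval : A z - z * A z - 2*p * f z - p^2 * (1-z)⁻¹ = 0 := by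
        rw [hAdef]
        have h1z : (1:ℝ) - z ≠ 0 := (hδIoo z hzδ).ne'
        field_simp
        ring
      rw [hval] at hcomb
      refine hcomb.congr_fun fun n => ?_
      ring
    have hq := coeff_eq_zero' (show (0:ℝ) < ρ₀/2/2 by positivity) key
    intro n
    have := hq n
    linarith
  have he1 : e 1 = p ^ 2 := by
    have h := hrec 0
    have he0 : e 0 = 0 := by simp [hedef]
    rw [he0] at h
    push_cast at h
    linarith
  have hd1 : d 1 = 1 := by
    have h2 : p ^ 2 * d 1 = p ^ 2 * 1 := by
      have h := he1
      simp only [hedef] at h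
      norm_num at h
      rw [h, mul_one]
    exact mul_left_cancel₀ hp2.ne' h2
  have hdrec : ∀ n : ℕ, 1 ≤ n → ((n:ℝ) + 1) * d (n + 1) = ((n:ℝ) + 2*p) * d n + 1 := by
    intro n hn
    have h := hrec n
    have h1 : e (n+1) = p^2 * d (n+1) := by simp [hedef]
    have h2 : e n = p^2 * d n := by simp [hedef, Nat.one_le_iff_ne_zero.mp hn]
    rw [h1, h2] at h
    apply mul_left_cancel₀ hp2.ne'
    ring_nf at h ⊢
    linarith
  constructor
  · intro hp12
    have h12 : 1 - 2*p ≠ 0 := fun h => hp12 (by linarith)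
    refine ⟨fun z hz => hasDerivAt_explicit h12 hz.1 hz.2, ?_, ?_⟩
    · -- uniqueness of the ODE solution
      set F : ℝ → ℝ := fun z =>
        p * (1 - p) / (1 - 2 * p) * (1 - z)⁻¹ - p ^ 2 / (1 - 2 * p) * (1 - z) ^ (-(2 * p))
        with hFdef
      have hF0 : F 0 = p := by
        rw [hFdef]
        simp only [sub_zero, inv_one, Real.one_rpow, mul_one]
        rw [div_sub_div_same, div_eq_iff h12]
        ring
      have hFd : ∀ z ∈ Ioo (-δ) δ, HasDerivAt F
          (2 * p / (1 - z) * F z + p * (1 - p) / (1 - z) ^ 2) z := by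
        intro z hz
        exact hasDerivAt_explicit h12 (by have := hz.1; linarith) (by have := hz.2; linarith)
      set G : ℝ → ℝ := fun z => (M z - F z) * (1 - z) ^ (2 * p) with hGdef
      have hGd : ∀ z ∈ Ioo (-δ) δ, HasDerivAt G 0 z := by
        intro z hz
        have h1z := hδIoo z hz
        have hpow : HasDerivAt (fun z : ℝ => (1 - z) ^ (2 * p))
            ((-1) * (2 * p) * (1 - z) ^ (2 * p - 1)) z :=
          (hasDerivAt_one_sub z).rpow_const (Or.inl h1z.ne')
        have hprod := ((hODE z hz).sub (hFd z hz)).mul hpow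
        refine hprod.congr_deriv ?_
        have hw : (1 - z) ^ (2 * p) = (1 - z) ^ (2 * p - 1) * (1 - z) := by
          rw [← Real.rpow_add_one h1z.ne' (2 * p - 1)]
          ring_nf
        rw [hw]
        set w := (1 - z) ^ (2 * p - 1) with hwdef
        field_simp
        rw [Pi.sub_apply]; ring
      have hGconst := eq_on_of_deriv_zero hδ0 hGd
      have hG0 : G 0 = 0 := by
        rw [hGdef]
        simp [hM0, hF0]
      intro z hz
      have h1z := hδIoo z hz
      have hGz := hGconst z hz
      rw [hG0] at hGz
      have hpow0 : (1 - z) ^ (2 * p) ≠ 0 := (Real.rpow_pos_of_pos h1z _).ne'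
      have := mul_eq_zero.mp hGz
      rcases this with h | h
      · have : M z = F z := by linarith
        rw [this, hFdef]
      · exact absurd h hpow0
    · -- closed form for d
      set bb : ℕ → ℝ := fun n =>
        (∏ i ∈ Finset.range n, (2 * p + (i : ℝ))) / (Nat.factorial n : ℝ) with hbbdef
      have hbrec : ∀ n : ℕ, ((n : ℝ) + 1) * bb (n + 1) = (2 * p + n) * bb n := by
        intro n
        rw [hbbdef]
        simp only [Finset.prod_range_succ, Nat.factorial_succ]
        have hfac : (Nat.factorial n : ℝ) ≠ 0 := Nat.cast_ne_zero.mpr (Nat.factorial_ne_zero n)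
        push_cast
        field_simp
      have claim : ∀ n : ℕ, 1 ≤ n → d n = 1 / (1 - 2 * p) * (1 - bb n) := by
        intro n hn
        induction n, hn using Nat.le_induction with
        | base =>
          have hbb1 : bb 1 = 2 * p := by
            rw [hbbdef]
            simp [Nat.factorial]
          rw [hd1, hbb1]
          field_simp
        | succ n hn ih =>
          have h := hdrec n hn
          rw [ih] at h
          have hb := hbrec n
          have hn1 : ((n : ℝ) + 1) ≠ 0 := by positivity
          apply mul_left_cancel₀ hn1
          rw [h]
          field_simp
          ring_nf
          ring_nf at hb
          linarith
      intro n hn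
      rw [gchoose_eq p n]
      exact claim n hn
  · intro hp12
    subst hp12
    intro n hn
    induction n with
    | zero => omega
    | succ m ih =>
      rcases Nat.eq_or_lt_of_le hn with h | h
      · simp [← h, hd1]
      · have hm : 1 ≤ m := by omega
        have hrec' := hdrec m hm
        rw [Finset.sum_Icc_succ_top (by omega : 1 ≤ m + 1), ← ih hm]
        have hm1 : ((m:ℝ) + 1) ≠ 0 := by positivity
        have hgoal : d (m + 1) = d m + 1 / ((m:ℝ) + 1) := by
          apply mul_left_cancel₀ hm1
          rw [hrec']
          field_simp
        rw [hgoal]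
        push_cast
        ring
end

section
/- Let 1/2 < p < 1 and define α_1 = p²/(2p−1) and α_r = (1/((r−1)(2p−1))) Σ_{ℓ=1}^{r−1} C(r,ℓ) α_ℓ α_{r−ℓ} for r ≥ 2. Then α_r = r! p^{2r} / (2p−1)^{2r−1} for all r ≥ 1. -/
open Real Filter Topology Set

/-- For `1/2 < p < 1`, the numbers `α_r` defined by `α_1 = p²/(2p−1)` and the binomial
convolution recurrence equal `r! p^{2r}/(2p−1)^{2r−1}`. -/
theorem stmt18 (p : ℝ) (hp : 1 / 2 < p) (hp1 : p < 1) (α : ℕ → ℝ)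
    (h1 : α 1 = p ^ 2 / (2 * p - 1))
    (hrec : ∀ r : ℕ, 2 ≤ r → α r =
      (1 / (((r : ℝ) - 1) * (2 * p - 1))) *
        ∑ l ∈ Finset.Ico 1 r, (Nat.choose r l : ℝ) * α l * α (r - l)) :
    ∀ r : ℕ, 1 ≤ r →
      α r = (Nat.factorial r : ℝ) * p ^ (2 * r) / (2 * p - 1) ^ (2 * r - 1) := by
  have h2p : (0:ℝ) < 2 * p - 1 := by linarith
  have hne : (2 * p - 1 : ℝ) ≠ 0 := ne_of_gt h2p
  intro r
  induction r using Nat.strong_induction_on with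
  | _ r ih =>
    intro hr
    rcases eq_or_lt_of_le hr with h | h
    · rw [← h]
      simpa using h1
    · have hr2 : 2 ≤ r := h
      have hrr : (0:ℝ) < (r:ℝ) - 1 := by
        have : (2:ℝ) ≤ (r:ℝ) := by exact_mod_cast hr2
        linarith
      rw [hrec r hr2]
      have hsum : ∑ l ∈ Finset.Ico 1 r, (Nat.choose r l : ℝ) * α l * α (r - l)
          = ∑ l ∈ Finset.Ico 1 r,
              ((Nat.factorial r : ℝ) * p ^ (2 * r) / (2 * p - 1) ^ (2 * r - 2)) := by
        apply Finset.sum_congr rfl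
        intro l hl
        obtain ⟨hl1, hlr⟩ := Finset.mem_Ico.mp hl
        have hl1' : 1 ≤ r - l := by omega
        have hlt : r - l < r := by omega
        rw [ih l hlr hl1, ih (r - l) hlt hl1']
        have e0 : l ≤ r := le_of_lt hlr
        have e1 : 2 * l - 1 + (2 * (r - l) - 1) = 2 * r - 2 := by omega
        have e2 : 2 * l + 2 * (r - l) = 2 * r := by omega
        have efact : (Nat.choose r l : ℝ) * (Nat.factorial l : ℝ) *
            (Nat.factorial (r - l) : ℝ) = (Nat.factorial r : ℝ) := by
          exact_mod_cast congrArg (Nat.cast : ℕ → ℝ)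
            (Nat.choose_mul_factorial_mul_factorial e0)
        have : (Nat.choose r l : ℝ) *
            ((Nat.factorial l : ℝ) * p ^ (2 * l) / (2 * p - 1) ^ (2 * l - 1)) *
            ((Nat.factorial (r - l) : ℝ) * p ^ (2 * (r - l)) /
              (2 * p - 1) ^ (2 * (r - l) - 1))
            = ((Nat.choose r l : ℝ) * (Nat.factorial l : ℝ) * (Nat.factorial (r - l) : ℝ))
              * (p ^ (2 * l) * p ^ (2 * (r - l))) /
              ((2 * p - 1) ^ (2 * l - 1) * (2 * p - 1) ^ (2 * (r - l) - 1)) := by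
          ring
        rw [this, efact, ← pow_add, ← pow_add, e1, e2]
      rw [hsum, Finset.sum_const, Nat.card_Ico]
      have hcard : ((r - 1 : ℕ) : ℝ) = (r:ℝ) - 1 := by
        have : 1 ≤ r := hr
        push_cast [this]
        ring
      rw [nsmul_eq_mul, hcard]
      have hpow : (2 * p - 1) ^ (2 * r - 1) = (2 * p - 1) ^ (2 * r - 2) * (2 * p - 1) := by
        rw [← pow_succ]
        congr 1
        omega
      rw [hpow]
      have hd : ((2 * p - 1) ^ (2 * r - 2) : ℝ) ≠ 0 := pow_ne_zero _ hne
      field_simp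
end
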